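/- arXiv:1102.4443 — 4 statements merged into one kernel-verified Lean document; each statement's English description precedes it below -/
import Mathlib

section
/- Let F : 𝕋¹ × ℝ → 𝕋¹ × ℝ be a lift of a quasiperiodically forced circle homeomorphism f over the irrational rotation by ω, with fibre maps F_θ. Suppose F satisfies the symmetry F_θ(−x) = 1 − F_{θ+1/2}(x) for all (θ,x). Then the fibred rotation number ρ(F) = lim_{n→∞} (F^n_θ(x) − x)/n equals 1/2. -/
/-! Iterating the symmetry gives `Fⁿ_θ(-x) = n - Fⁿ_{θ+1/2}(x)`; dividing by `n` and letting
`n → ∞` yields `ρ = 1 - ρ`. -/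

open Filter AddConstMap AddConstMapClass

theorem add_eq_one_of_add_eq_natCast_of_tendsto_div {u v : ℕ → ℝ} {a b : ℝ}
    (huv : ∀ n, u n + v n = n) (hu : Tendsto (fun n => u n / n) atTop (nhds a))
    (hv : Tendsto (fun n => v n / n) atTop (nhds b)) : a + b = 1 := by
  have hsum : Tendsto (fun n : ℕ => (u n + v n) / n) atTop (nhds (a + b)) := by
    simpa only [add_div] using hu.add hv
  have hone : (fun n : ℕ => (u n + v n) / n) =ᶠ[atTop] fun _ => 1 := by
    filter_upwards [eventually_ne_atTop 0] with n hn
    rw [huv, div_self (Nat.cast_ne_zero.mpr hn)]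
  exact tendsto_nhds_unique (hsum.congr' hone) tendsto_const_nhds

theorem fibreIterate_neg {F : ℝ → ℝ → ℝ} {Fit : ℕ → ℝ → ℝ → ℝ} {ω s : ℝ}
    (hdeg : ∀ θ x, F θ (x + 1) = F θ x + 1) (hsym : ∀ θ x, F θ (-x) = 1 - F (θ + s) x)
    (hFit0 : ∀ θ x, Fit 0 θ x = x)
    (hFitS : ∀ n θ x, Fit (n + 1) θ x = F (θ + n * ω) (Fit n θ x)) (n : ℕ) (θ x : ℝ) :
    Fit n θ (-x) = n - Fit n (θ + s) x := by
  induction n with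
  | zero => simp [hFit0]
  | succ k ih =>
    let Fθ : ℝ →+c[1, 1] ℝ := ⟨F (θ + k * ω), hdeg _⟩
    have hshift : F (θ + k * ω) (-Fit k (θ + s) x + k) =
        F (θ + k * ω) (-Fit k (θ + s) x) + k := map_add_nat Fθ _ k
    rw [hFitS, hFitS, ih, sub_eq_neg_add, hshift, hsym, add_right_comm θ s]
    push_cast
    ring

theorem symmetry_forces_rotation_number_half_general (ω : ℝ)
    (F : ℝ → ℝ → ℝ)
    (hdeg : ∀ θ x, F θ (x + 1) = F θ x + 1)
    (hsym : ∀ θ x, F θ (-x) = 1 - F (θ + 1/2) x)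
    (Fit : ℕ → ℝ → ℝ → ℝ)
    (hFit0 : ∀ θ x, Fit 0 θ x = x)
    (hFitS : ∀ n θ x, Fit (n + 1) θ x = F (θ + n * ω) (Fit n θ x))
    (ρ : ℝ)
    (hρ : ∀ θ x, Tendsto (fun n : ℕ => (Fit n θ x - x) / n) atTop (nhds ρ)) :
    ρ = 1/2 := by
  have hsum (n : ℕ) : Fit n 0 0 + Fit n (1/2) 0 = n := by
    have h := fibreIterate_neg hdeg hsym hFit0 hFitS n 0 0
    rw [neg_zero, zero_add] at h
    linarith
  have := add_eq_one_of_add_eq_natCast_of_tendsto_div hsum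
    (by simpa only [sub_zero] using hρ 0 0) (by simpa only [sub_zero] using hρ (1/2) 0)
  linarith

/-- If a lift `F` of a qpf circle homeomorphism over an irrational
rotation satisfies the symmetry `F_θ(-x) = 1 - F_{θ+1/2}(x)`, then the fibred
rotation number `ρ(F) = lim (Fⁿ_θ(x) - x)/n` equals 1/2.  Here `Fit n θ x`
denotes the fibre map of the n-th iterate, and the existence and
(θ,x)-independence of the limit is assumed. -/
theorem symmetry_forces_rotation_number_half (ω : ℝ) (hω : Irrational ω)
    (F : ℝ → ℝ → ℝ)
    (hmono : ∀ θ, StrictMono (F θ))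
    (hper : ∀ θ x, F (θ + 1) x = F θ x)
    (hdeg : ∀ θ x, F θ (x + 1) = F θ x + 1)
    (hsym : ∀ θ x, F θ (-x) = 1 - F (θ + 1/2) x)
    (Fit : ℕ → ℝ → ℝ → ℝ)
    (hFit0 : ∀ θ x, Fit 0 θ x = x)
    (hFitS : ∀ n θ x, Fit (n + 1) θ x = F (θ + n * ω) (Fit n θ x))
    (ρ : ℝ)
    (hρ : ∀ θ x, Tendsto (fun n : ℕ => (Fit n θ x - x) / n) atTop (nhds ρ)) :
    ρ = 1/2 :=
  symmetry_forces_rotation_number_half_general ω F hdeg hsym Fit hFit0 hFitS ρ hρ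
end

section
/- Let f be a quasiperiodically forced circle diffeomorphism with fibre maps f_θ that are C¹ with ∂_x f_θ(x) > 0. Suppose φ : 𝕋¹ → 𝕋¹ is a continuous invariant graph (f_θ(φ(θ)) = φ(θ+ω) for all θ) with ω irrational. If the Lyapunov exponent λ(φ) = ∫_{𝕋¹} log ∂_x f_θ(φ(θ)) dθ is strictly negative, then there exists ε > 0 and λ' < 0 such that for all θ ∈ 𝕋¹ and all x with d(x, φ(θ)) < ε, the forward orbit of (θ,x) converges to the graph: d(f^n_θ(x), φ(θ+nω)) → 0 as n → ∞. -/
/-!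
The engine is Weyl's theorem: for an irrational rotation the Birkhoff averages of every
continuous function converge uniformly to its mean. For a character `fourier j` with `j ≠ 0`
the Birkhoff sums are bounded geometric sums; functions with uniformly convergent averages form
a closed subspace, and the characters span a dense one.

Apply this to `g θ = log ∂ₓF_θ(φ θ)`, whose mean `λ` is negative: there is a block length `N`
such that every `N`-step Birkhoff sum of `g` is below `N λ / 2`, uniformly in the starting
angle. By continuity, `log ∂ₓF_θ ≤ g θ + |λ| / 4` on a `δ`-neighbourhood of the graph, so by the
mean value theorem, as long as an orbit stays `δ`-close to the graph, its distance to the graph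
shrinks by the factor `exp (N λ / 4)` over every block of `N` steps. An orbit starting within
`δ exp (-N A)`, where `A` bounds the one-step exponent, therefore never leaves the neighbourhood,
and its distance to the graph tends to `0`.
-/

open Filter Real Finset Topology MeasureTheory

section Birkhoff

variable {𝕜 X E : Type*} [RCLike 𝕜] [NormedAddCommGroup E] [NormedSpace 𝕜 E]

theorem norm_birkhoffAverage_le {f : X → X} {g : X → E} {C : ℝ} (hC : 0 ≤ C)
    (hg : ∀ x, ‖g x‖ ≤ C) (n : ℕ) (x : X) : ‖birkhoffAverage 𝕜 f g n x‖ ≤ C := by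
  rcases Nat.eq_zero_or_pos n with rfl | hn
  · simpa [birkhoffAverage_zero] using hC
  calc ‖birkhoffAverage 𝕜 f g n x‖ = (n : ℝ)⁻¹ * ‖birkhoffSum f g n x‖ := by
        rw [birkhoffAverage, norm_smul, norm_inv, RCLike.norm_natCast]
    _ ≤ (n : ℝ)⁻¹ * (n * C) := by
        gcongr
        simpa [birkhoffSum] using norm_sum_le_of_le (range n) fun k _ => hg (f^[k] x)
    _ = C := by field_simp

theorem tendstoUniformly_birkhoffAverage_zero {f : X → X} {g : X → E} {C : ℝ}
    (hg : ∀ n x, ‖birkhoffSum f g n x‖ ≤ C) :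
    TendstoUniformly (birkhoffAverage 𝕜 f g) 0 atTop := by
  refine Metric.tendstoUniformly_iff.2 fun ε hε => ?_
  filter_upwards [eventually_gt_atTop 0,
    tendsto_natCast_atTop_atTop.eventually_gt_atTop (C / ε)] with n hn hCn x
  have hn' : (0 : ℝ) < n := by exact_mod_cast hn
  calc dist 0 (birkhoffAverage 𝕜 f g n x) = (n : ℝ)⁻¹ * ‖birkhoffSum f g n x‖ := by
        rw [dist_zero_left, birkhoffAverage, norm_smul, norm_inv, RCLike.norm_natCast]
    _ ≤ (n : ℝ)⁻¹ * C := by gcongr; exact hg n x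
    _ < ε := by rw [inv_mul_lt_iff₀ hn']; rwa [div_lt_iff₀ hε] at hCn

variable [TopologicalSpace X] [CompactSpace X]

theorem isClosed_setOf_tendstoUniformly_birkhoffAverage (f : X → X) {l : C(X, E) → E}
    (hl : Continuous l) :
    IsClosed {g : C(X, E) | TendstoUniformly (birkhoffAverage 𝕜 f g) (fun _ => l g) atTop} := by
  refine isClosed_of_closure_subset fun g hg => Metric.tendstoUniformly_iff.2 fun ε hε => ?_
  obtain ⟨δ, hδ, hlδ⟩ := Metric.continuousAt_iff.1 hl.continuousAt (ε / 3) (by positivity)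
  obtain ⟨h, hh, hgh⟩ := Metric.mem_closure_iff.1 hg (min δ (ε / 3)) (by positivity)
  filter_upwards [Metric.tendstoUniformly_iff.1 hh (ε / 3) (by positivity)] with n hn x
  have hgh' : ∀ y, ‖(g - h) y‖ ≤ ‖g - h‖ := (g - h).norm_coe_le_norm
  have havg : dist (birkhoffAverage 𝕜 f h n x) (birkhoffAverage 𝕜 f g n x) < ε / 3 := by
    rw [dist_comm, dist_eq_norm, ← Pi.sub_apply (birkhoffAverage 𝕜 f g n),
      ← Pi.sub_apply (birkhoffAverage 𝕜 f g), ← birkhoffAverage_sub, ← ContinuousMap.coe_sub]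
    refine (norm_birkhoffAverage_le (norm_nonneg _) hgh' n x).trans_lt ?_
    rw [← dist_eq_norm]
    exact hgh.trans_le (min_le_right _ _)
  calc dist (l g) (birkhoffAverage 𝕜 f g n x)
      ≤ dist (l g) (l h) + dist (l h) (birkhoffAverage 𝕜 f h n x)
        + dist (birkhoffAverage 𝕜 f h n x) (birkhoffAverage 𝕜 f g n x) := dist_triangle4 _ _ _ _
    _ < ε / 3 + ε / 3 + ε / 3 := by
        gcongr
        · rw [dist_comm]; exact hlδ (by rw [dist_comm]; exact hgh.trans_le (min_le_left _ _))
        · exact hn x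
    _ = ε := by ring

end Birkhoff

section ContinuousFunctions

variable {X : Type*} [TopologicalSpace X] [CompactSpace X] [MeasurableSpace X] [BorelSpace X]

theorem ContinuousMap.integrable (μ : Measure X) [IsFiniteMeasure μ] (g : C(X, ℂ)) :
    Integrable g μ :=
  (BoundedContinuousFunction.mkOfCompact g).integrable μ

theorem ContinuousMap.continuous_integral (μ : Measure X) [IsProbabilityMeasure μ] :
    Continuous fun g : C(X, ℂ) => ∫ x, g x ∂μ := by
  refine (LipschitzWith.of_dist_le_mul (K := 1) fun g h => ?_).continuous
  rw [NNReal.coe_one, one_mul, dist_eq_norm, dist_eq_norm,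
    ← integral_sub (g.integrable μ) (h.integrable μ)]
  simpa using norm_integral_le_of_norm_le_const (μ := μ)
    (Eventually.of_forall fun x => (g - h).norm_coe_le_norm x)

def uniformBirkhoffSubmodule (f : X → X) (μ : Measure X) [IsFiniteMeasure μ] :
    Submodule ℂ C(X, ℂ) where
  carrier := {g | TendstoUniformly (birkhoffAverage ℂ f g) (fun _ => ∫ x, g x ∂μ) atTop}
  add_mem' {g h} hg hh := by
    show TendstoUniformly _ (fun _ => ∫ x, (g + h) x ∂μ) atTop
    convert hg.add hh using 1
    · rw [ContinuousMap.coe_add, birkhoffAverage_add]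
    · funext
      exact integral_add (g.integrable μ) (h.integrable μ)
  zero_mem' := by
    show TendstoUniformly _ (fun _ => ∫ x, (0 : C(X, ℂ)) x ∂μ) atTop
    convert (tendsto_const_nhds (x := (0 : ℂ)) (f := atTop)).tendstoUniformly_const (α := X)
      using 1
    · funext n x
      simp [birkhoffAverage, birkhoffSum]
    · simp
  smul_mem' c g hg := by
    show TendstoUniformly _ (fun _ => ∫ x, (c • g) x ∂μ) atTop
    convert (uniformContinuous_const_smul c).comp_tendstoUniformly hg using 1
    · funext n x
      simp [birkhoffAverage, birkhoffSum, Finset.mul_sum, mul_left_comm c]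
    · funext
      exact integral_smul c g

theorem isClosed_uniformBirkhoffSubmodule (f : X → X) (μ : Measure X) [IsProbabilityMeasure μ] :
    IsClosed (uniformBirkhoffSubmodule f μ : Set C(X, ℂ)) :=
  isClosed_setOf_tendstoUniformly_birkhoffAverage f (ContinuousMap.continuous_integral μ)

end ContinuousFunctions

namespace AddCircle

variable {T : ℝ}

theorem fourier_add_apply (j : ℤ) (x y : AddCircle T) :
    fourier j (x + y) = fourier j x * fourier j y := by
  simp only [fourier_apply, smul_add, toCircle_add, Circle.coe_mul]

theorem fourier_nsmul_apply (j : ℤ) (k : ℕ) (x : AddCircle T) :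
    fourier j (k • x) = fourier j x ^ k := by
  simp only [fourier_apply, smul_comm j k x, toCircle_nsmul, Circle.coe_pow]

theorem birkhoffSum_add_fourier (α : AddCircle T) (j : ℤ) (n : ℕ) (x : AddCircle T) :
    birkhoffSum (· + α) (fourier j) n x = fourier j x * ∑ k ∈ range n, fourier j α ^ k := by
  simp only [birkhoffSum, add_right_iterate, fourier_add_apply, fourier_nsmul_apply, mul_sum]

variable [hT : Fact (0 < T)]

theorem fourier_apply_ne_one {α : AddCircle T} (hα : ¬IsOfFinAddOrder α) {j : ℤ} (hj : j ≠ 0) :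
    fourier j α ≠ 1 := by
  intro h
  refine hα (isOfFinAddOrder_iff_zsmul_eq_zero.2 ⟨j, hj, injective_toCircle hT.out.ne' ?_⟩)
  rw [toCircle_zero]
  exact Circle.ext (by simpa using h)

theorem norm_birkhoffSum_add_fourier_le {α : AddCircle T} (hα : ¬IsOfFinAddOrder α) {j : ℤ}
    (hj : j ≠ 0) (n : ℕ) (x : AddCircle T) :
    ‖birkhoffSum (· + α) (fourier j) n x‖ ≤ 2 / ‖1 - fourier j α‖ := by
  have hz : fourier j α ≠ 1 := fourier_apply_ne_one hα hj
  have hnorm : ∀ y : AddCircle T, ‖fourier j y‖ = 1 := fun y => Circle.norm_coe _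
  rw [birkhoffSum_add_fourier, norm_mul, hnorm, one_mul, geom_sum_eq hz, norm_div,
    norm_sub_rev (fourier j α) 1]
  gcongr
  calc ‖fourier j α ^ n - 1‖ ≤ ‖fourier j α ^ n‖ + ‖(1 : ℂ)‖ := norm_sub_le _ _
    _ = 2 := by rw [norm_pow, hnorm, one_pow, norm_one]; norm_num

theorem integral_fourier_of_ne_zero {j : ℤ} (hj : j ≠ 0) :
    ∫ x, fourier j x ∂(haarAddCircle : Measure (AddCircle T)) = 0 := by
  have := congr_fun (fourierCoeff_fourier (T := T) j) 0
  simpa [fourierCoeff, Pi.single_apply, Ne.symm hj] using this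

theorem fourier_mem_uniformBirkhoffSubmodule {α : AddCircle T} (hα : ¬IsOfFinAddOrder α)
    (j : ℤ) : fourier j ∈ uniformBirkhoffSubmodule (· + α) haarAddCircle := by
  show TendstoUniformly _ _ _
  rcases eq_or_ne j 0 with rfl | hj
  · have hinv : ⇑(fourier 0 : C(AddCircle T, ℂ)) ∘ (· + α) = fourier 0 := by
      funext x
      simp
    rw [tendstoUniformly_congr ((eventually_ne_atTop (0 : ℕ)).mono fun n hn =>
      birkhoffAverage_of_comp_eq ℂ hinv (Nat.cast_ne_zero.2 hn))]
    convert (tendsto_const_nhds (x := (1 : ℂ)) (f := (atTop : Filter ℕ))).tendstoUniformly_const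
      (α := AddCircle T) using 1 <;> funext <;> simp
  · rw [integral_fourier_of_ne_zero hj]
    exact tendstoUniformly_birkhoffAverage_zero (norm_birkhoffSum_add_fourier_le hα hj)

theorem tendstoUniformly_birkhoffAverage_add {α : AddCircle T} (hα : ¬IsOfFinAddOrder α)
    (g : C(AddCircle T, ℂ)) :
    TendstoUniformly (birkhoffAverage ℂ (· + α) g) (fun _ => ∫ x, g x ∂haarAddCircle) atTop := by
  have hspan :
      Submodule.span ℂ (Set.range fourier) ≤ uniformBirkhoffSubmodule (· + α) haarAddCircle :=
    Submodule.span_le.2 (Set.range_subset_iff.2 (fourier_mem_uniformBirkhoffSubmodule hα))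
  have hclosure := Submodule.topologicalClosure_minimal _ hspan
    (isClosed_uniformBirkhoffSubmodule _ haarAddCircle)
  rw [span_fourier_closure_eq_top] at hclosure
  exact hclosure (Submodule.mem_top (x := g))

end AddCircle

theorem Function.Periodic.tendstoUniformly_birkhoffAverage_add {g : ℝ → ℝ} {T : ℝ}
    (hp : Function.Periodic g T) (hT : 0 < T) (hg : Continuous g) {ω : ℝ}
    (hω : Irrational (ω / T)) :
    TendstoUniformly (birkhoffAverage ℝ (· + ω) g) (fun _ => T⁻¹ * ∫ x in 0..T, g x) atTop := by
  have := Fact.mk hT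
  let G : C(AddCircle T, ℂ) :=
    ⟨fun x => (hp.lift x : ℂ), Complex.continuous_ofReal.comp (continuous_quot_lift _ hg)⟩
  have hα : ¬IsOfFinAddOrder (ω : AddCircle T) :=
    AddCircle.not_isOfFinAddOrder_iff_forall_rat_ne_div.2 fun q => (hω.ne_rat q).symm
  have hGint : ∫ x, G x ∂AddCircle.haarAddCircle = T⁻¹ * ∫ x in 0..T, g x := by
    rw [AddCircle.integral_haarAddCircle, ← AddCircle.intervalIntegral_preimage T 0, zero_add]
    simp [G, intervalIntegral.integral_ofReal]
  have hG := (Complex.reCLM.uniformContinuous.comp_tendstoUniformly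
    (AddCircle.tendstoUniformly_birkhoffAverage_add hα G)).comp ((↑) : ℝ → AddCircle T)
  convert hG using 1
  · funext n θ
    simp only [birkhoffAverage, birkhoffSum, add_right_iterate, Function.comp_apply,
      ← QuotientAddGroup.mk_nsmul, ← QuotientAddGroup.mk_add]
    simp only [G, ContinuousMap.coe_mk, hp.lift_coe]
    simp [nsmul_eq_mul]
  · funext
    simp [hGint]

theorem Function.Periodic.exists_forall_sum_lt {g : ℝ → ℝ} {T : ℝ} (hp : Function.Periodic g T)
    (hT : 0 < T) (hg : Continuous g) {ω : ℝ} (hω : Irrational (ω / T)) {c : ℝ}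
    (hc : T⁻¹ * ∫ x in 0..T, g x < c) :
    ∃ N > 0, ∀ θ, ∑ k ∈ range N, g (θ + k * ω) < N * c := by
  have hunif := Metric.tendstoUniformly_iff.1 (hp.tendstoUniformly_birkhoffAverage_add hT hg hω)
    _ (sub_pos.2 hc)
  obtain ⟨N, hN, hlt⟩ := ((eventually_gt_atTop 0).and hunif).exists
  refine ⟨N, hN, fun θ => ?_⟩
  have hN' : (0 : ℝ) < N := by exact_mod_cast hN
  have havg := (abs_lt.1 (Real.dist_eq _ _ ▸ hlt θ)).1
  simp only [birkhoffAverage, birkhoffSum, add_right_iterate, nsmul_eq_mul, smul_eq_mul] at havg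
  rw [← inv_mul_lt_iff₀ hN']
  linarith

theorem Continuous.tendstoUniformly_of_periodic {α β : Type*} [UniformSpace α]
    [WeaklyLocallyCompactSpace α] [UniformSpace β] {F : α → ℝ → β} {T : ℝ} (hT : 0 < T)
    (hp : ∀ a, Function.Periodic (F a) T) (hF : Continuous ↿F) (a : α) :
    TendstoUniformly F (F a) (𝓝 a) := by
  let G : α → Set.Icc 0 T → β := fun b s => F b s
  have hG : TendstoUniformly G (G a) (𝓝 a) :=
    Continuous.tendstoUniformly G (hF.comp (continuous_fst.prodMk
      (continuous_subtype_val.comp continuous_snd))) a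
  intro u hu
  filter_upwards [hG u hu] with b hb θ
  have hmem : toIcoMod hT 0 θ ∈ Set.Icc 0 T := by
    simpa using Set.Ico_subset_Icc_self (toIcoMod_mem_Ico hT 0 θ)
  have hmod : ∀ c, F c (toIcoMod hT 0 θ) = F c θ := fun c => (hp c).sub_zsmul_eq _
  simpa only [G, hmod] using hb ⟨_, hmem⟩

theorem abs_sub_le_exp_mul_of_log_deriv_le {f : ℝ → ℝ} {u v δ a : ℝ} (hf : Differentiable ℝ f)
    (hpos : ∀ z, 0 < deriv f z) (ha : ∀ z, |z - v| < δ → log (deriv f z) ≤ a)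
    (hu : |u - v| < δ) : |f u - f v| ≤ exp a * |u - v| := by
  have hderiv : ∀ z ∈ Metric.ball v δ, ‖deriv f z‖ ≤ exp a := fun z hz => by
    rw [Real.norm_eq_abs, abs_of_pos (hpos z), ← exp_log (hpos z)]
    exact exp_le_exp.2 (ha z (by simpa [Real.dist_eq] using hz))
  simpa [Real.norm_eq_abs] using (convex_ball v δ).norm_image_sub_le_of_norm_deriv_le
    (fun z _ => hf z) hderiv (Metric.mem_ball_self (by linarith [abs_nonneg (u - v)]))
    (by simpa [Real.dist_eq] using hu)

theorem sum_range_mul_add_le {a : ℕ → ℝ} {A c : ℝ} {N : ℕ} (ha : ∀ k, a k ≤ A)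
    (hblock : ∀ j, ∑ i ∈ range N, a (j + i) ≤ -c) (m r : ℕ) :
    ∑ i ∈ range (m * N + r), a i ≤ -(m * c) + r * A := by
  induction m generalizing a with
  | zero => simpa using sum_le_card_nsmul (range r) a A fun i _ => ha i
  | succ m ih =>
    have htail := ih (a := fun i => a (N + i)) (fun k => ha _)
      (fun j => by simpa only [add_assoc] using hblock (N + j))
    rw [show (m + 1) * N + r = N + (m * N + r) by ring, sum_range_add]
    have hhead := hblock 0
    simp only [zero_add] at hhead
    push_cast
    linarith

theorem sum_range_le_of_forall_sum_block_le {a : ℕ → ℝ} {A c : ℝ} {N : ℕ} (hN : 0 < N)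
    (hA : 0 ≤ A) (ha : ∀ k, a k ≤ A) (hblock : ∀ j, ∑ i ∈ range N, a (j + i) ≤ -c) (k : ℕ) :
    ∑ i ∈ range k, a i ≤ -((k / N : ℕ) * c) + N * A := by
  have hk := sum_range_mul_add_le ha hblock (k / N) (k % N)
  rw [Nat.div_add_mod'] at hk
  have hr : ((k % N : ℕ) : ℝ) ≤ N := by exact_mod_cast (Nat.mod_lt k hN).le
  nlinarith

theorem tendsto_zero_of_abs_succ_le_exp_mul {d a : ℕ → ℝ} {δ A c : ℝ} {N : ℕ} (hN : 0 < N)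
    (hc : 0 < c) (hA : 0 ≤ A) (ha : ∀ k, a k ≤ A)
    (hblock : ∀ j, ∑ i ∈ range N, a (j + i) ≤ -c)
    (hstep : ∀ k, |d k| < δ → |d (k + 1)| ≤ exp (a k) * |d k|)
    (hd0 : |d 0| < δ * exp (-(N * A))) :
    Tendsto d atTop (𝓝 0) := by
  have hS := sum_range_le_of_forall_sum_block_le hN hA ha hblock
  have hbound : ∀ k, |d k| ≤ exp (∑ i ∈ range k, a i) * |d 0| := by
    intro k
    induction k with
    | zero => simp
    | succ k ih =>
      have hsmall : |d k| < δ := by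
        calc |d k| ≤ exp (∑ i ∈ range k, a i) * |d 0| := ih
          _ ≤ exp (N * A) * |d 0| := by
              gcongr
              linarith [hS k, mul_nonneg (Nat.cast_nonneg (k / N)) hc.le]
          _ < exp (N * A) * (δ * exp (-(N * A))) := by gcongr
          _ = δ := by rw [mul_left_comm, ← exp_add, add_neg_cancel, exp_zero, mul_one]
      calc |d (k + 1)| ≤ exp (a k) * |d k| := hstep k hsmall
        _ ≤ exp (a k) * (exp (∑ i ∈ range k, a i) * |d 0|) := by gcongr
        _ = exp (∑ i ∈ range (k + 1), a i) * |d 0| := by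
            rw [sum_range_succ, exp_add]; ring
  have hdiv : Tendsto (fun k => -(((k / N : ℕ) : ℝ) * c) + N * A) atTop atBot :=
    tendsto_atBot_add_const_right _ _ (tendsto_neg_atTop_atBot.comp
      ((tendsto_natCast_atTop_atTop.comp (Nat.tendsto_div_const_atTop hN.ne')).atTop_mul_const hc))
  have hexp : Tendsto (fun k => exp (∑ i ∈ range k, a i) * |d 0|) atTop (𝓝 0) := by
    simpa using (tendsto_exp_atBot.comp (tendsto_atBot_mono hS hdiv)).mul_const |d 0|
  exact squeeze_zero_norm hbound hexp

theorem tendsto_sub_of_log_deriv_le {f : ℕ → ℝ → ℝ} {x y a : ℕ → ℝ} {δ A c : ℝ} {N : ℕ}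
    (hf : ∀ k, Differentiable ℝ (f k)) (hpos : ∀ k z, 0 < deriv (f k) z)
    (hx : ∀ k, x (k + 1) = f k (x k)) (hy : ∀ k, y (k + 1) = f k (y k))
    (hloc : ∀ k z, |z - y k| < δ → log (deriv (f k) z) ≤ a k)
    (hN : 0 < N) (hc : 0 < c) (hA : 0 ≤ A) (ha : ∀ k, a k ≤ A)
    (hblock : ∀ j, ∑ i ∈ range N, a (j + i) ≤ -c) (h0 : |x 0 - y 0| < δ * exp (-(N * A))) :
    Tendsto (fun k => x k - y k) atTop (𝓝 0) :=
  tendsto_zero_of_abs_succ_le_exp_mul hN hc hA ha hblock (fun k hk => by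
    simpa only [hx, hy] using abs_sub_le_exp_mul_of_log_deriv_le (hf k) (hpos k) (hloc k) hk) h0

theorem Continuous.exists_forall_lt_add_of_periodic {L : ℝ → ℝ → ℝ} {φ : ℝ → ℝ} {T η : ℝ}
    (hL : Continuous ↿L) (hLp : ∀ z, Function.Periodic (L · z) T) (hφ : Continuous φ)
    (hφp : Function.Periodic φ T) (hT : 0 < T) (hη : 0 < η) :
    ∃ δ > 0, ∀ θ z, |z - φ θ| < δ → L θ z < L θ (φ θ) + η := by
  have hunif := Continuous.tendstoUniformly_of_periodic (F := fun t θ => L θ (φ θ + t)) hT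
    (fun t θ => by simp only [hφp θ, hLp _ θ])
    (hL.comp ((continuous_snd.prodMk ((hφ.comp continuous_snd).add continuous_fst)))) 0
  obtain ⟨δ, hδ, hnear⟩ := Metric.eventually_nhds_iff.1 (Metric.tendstoUniformly_iff.1 hunif η hη)
  refine ⟨δ, hδ, fun θ z hz => ?_⟩
  have := hnear (y := z - φ θ) (by rwa [Real.dist_eq, sub_zero]) θ
  rw [Real.dist_eq, add_zero, add_sub_cancel] at this
  linarith [(abs_lt.1 this).1]

theorem negative_lyapunov_attracts_general (ω : ℝ) (hω : Irrational ω)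
    (F : ℝ → ℝ → ℝ)
    (hper : ∀ θ x, F (θ + 1) x = F θ x)
    (hdiff : ∀ θ, Differentiable ℝ (F θ))
    (hpos : ∀ θ x, 0 < deriv (F θ) x)
    (hdcont : Continuous fun p : ℝ × ℝ => deriv (F p.1) p.2)
    (φ : ℝ → ℝ) (hφc : Continuous φ) (hφper : ∀ θ, φ (θ + 1) = φ θ)
    (hinv : ∀ θ, F θ (φ θ) = φ (θ + ω))
    (Fit : ℕ → ℝ → ℝ → ℝ)
    (hFit0 : ∀ θ x, Fit 0 θ x = x)
    (hFitS : ∀ n θ x, Fit (n + 1) θ x = F (θ + n * ω) (Fit n θ x))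
    (hLyap : (∫ θ in (0:ℝ)..1, Real.log (deriv (F θ) (φ θ))) < 0) :
    ∃ ε > (0:ℝ), ∃ lam < (0:ℝ), ∀ θ x, |x - φ θ| < ε →
      Tendsto (fun n : ℕ =>
          ‖((Fit n θ x - φ (θ + n * ω) : ℝ) : AddCircle (1 : ℝ))‖)
        atTop (nhds 0) := by
  set L : ℝ → ℝ → ℝ := fun θ z => log (deriv (F θ) z)
  set g : ℝ → ℝ := fun θ => L θ (φ θ)
  set η := -(∫ θ in (0:ℝ)..1, g θ) / 4
  have hη : 0 < η := by simp only [η, g, L]; linarith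
  have hLc : Continuous ↿L := hdcont.log fun p => (hpos p.1 p.2).ne'
  have hLp : ∀ z, Function.Periodic (L · z) 1 := fun z θ => by simp only [L, funext (hper θ)]
  have hgc : Continuous g := hLc.comp (continuous_id.prodMk hφc)
  have hgp : Function.Periodic g 1 := fun θ => by simp only [g, hφper, hLp (φ θ) θ]
  obtain ⟨N, hN, hBirk⟩ := hgp.exists_forall_sum_lt one_pos hgc (by simpa using hω)
    (c := -2 * η) (by simp only [η, inv_one, one_mul]; linarith)
  obtain ⟨δ, hδ, hloc⟩ := hLc.exists_forall_lt_add_of_periodic hLp hφc hφper one_pos hη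
  obtain ⟨B, hB⟩ := (hgp.compact_of_continuous one_ne_zero hgc).bddAbove
  refine ⟨δ * exp (-(N * max (B + η) 0)), by positivity, -1, by norm_num, fun θ x hx => ?_⟩
  have hblock : ∀ j, ∑ i ∈ range N, (g (θ + (j + i : ℕ) * ω) + η) ≤ -(N * η) := fun j => by
    have := hBirk (θ + j * ω)
    simp only [sum_add_distrib, sum_const, card_range, nsmul_eq_mul, Nat.cast_add, add_mul,
      ← add_assoc] at this ⊢
    linarith
  have hd := tendsto_sub_of_log_deriv_le (f := fun k => F (θ + k * ω)) (x := fun k => Fit k θ x)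
    (y := fun k => φ (θ + k * ω)) (a := fun k => g (θ + k * ω) + η)
    (fun k => hdiff _) (fun k => hpos _) (fun k => hFitS k θ x)
    (fun k => by rw [hinv, Nat.cast_succ, add_mul, one_mul, add_assoc])
    (fun k z hz => (hloc _ z hz).le) hN (by positivity) (le_max_right _ _)
    (fun k => by linarith [hB ⟨θ + k * ω, rfl⟩, le_max_left (B + η) 0]) hblock
    (by simpa [hFit0] using hx)
  exact squeeze_zero (fun n => norm_nonneg _) (fun n => QuotientAddGroup.norm_mk_le_norm)
    (tendsto_zero_iff_norm_tendsto_zero.1 hd)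

/-- A continuous invariant graph φ of a qpf circle diffeomorphism
(over an irrational rotation) with strictly negative Lyapunov exponent
attracts all nearby orbits: there are ε > 0 and lam < 0 such that for every θ
and every x with |x - φ(θ)| < ε, the circle distance
`d(fⁿ_θ(x), φ(θ + nω))` tends to 0.  The system is represented by lifts
`F θ : ℝ → ℝ` (degree one, 1-periodic in θ), with iterates `Fit`. -/
theorem negative_lyapunov_attracts (ω : ℝ) (hω : Irrational ω)
    (F : ℝ → ℝ → ℝ)
    (hper : ∀ θ x, F (θ + 1) x = F θ x)
    (hdeg : ∀ θ x, F θ (x + 1) = F θ x + 1)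
    (hdiff : ∀ θ, Differentiable ℝ (F θ))
    (hpos : ∀ θ x, 0 < deriv (F θ) x)
    (hdcont : Continuous fun p : ℝ × ℝ => deriv (F p.1) p.2)
    (φ : ℝ → ℝ) (hφc : Continuous φ) (hφper : ∀ θ, φ (θ + 1) = φ θ)
    (hinv : ∀ θ, F θ (φ θ) = φ (θ + ω))
    (Fit : ℕ → ℝ → ℝ → ℝ)
    (hFit0 : ∀ θ x, Fit 0 θ x = x)
    (hFitS : ∀ n θ x, Fit (n + 1) θ x = F (θ + n * ω) (Fit n θ x))
    (hLyap : (∫ θ in (0:ℝ)..1, Real.log (deriv (F θ) (φ θ))) < 0) :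
    ∃ ε > (0:ℝ), ∃ lam < (0:ℝ), ∀ θ x, |x - φ θ| < ε →
      Tendsto (fun n : ℕ =>
          ‖((Fit n θ x - φ (θ + n * ω) : ℝ) : AddCircle (1 : ℝ))‖)
        atTop (nhds 0) :=
  negative_lyapunov_attracts_general ω hω F hper hdiff hpos hdcont φ hφc hφper hinv Fit hFit0 hFitS
    hLyap
end

section
/- Suppose I(τ) = (a(τ), b(τ)) and J(τ) = (c(τ), d(τ)) are two disjoint open subintervals of the circle 𝕋¹ depending differentiably on a parameter τ ranging over an interval Λ ⊆ ℝ, both of length ≤ δ, and suppose the relative speed satisfies ∂_τ(y(τ) − x(τ)) > η/2 for all choices x(τ) ∈ {a(τ), b(τ)} and y(τ) ∈ {c(τ), d(τ)} (with y−x measured as the length of the positively oriented arc, differentiably in τ). Then for any ε > 0, the set {τ ∈ Λ : d(I(τ), J(τ)) ≤ ε} consists of at most 2 intervals, each of length ≤ 4(δ+ε)/η, so its Lebesgue measure is at most 8(δ+ε)/η. -/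
open MeasureTheory

/-- The open arc on 𝕋¹ = ℝ/ℤ which is the projection of the interval (a,b). -/
noncomputable def arc (a b : ℝ) : Set (AddCircle (1 : ℝ)) :=
  (fun x : ℝ => (x : AddCircle (1 : ℝ))) '' Set.Ioo a b

/-- The distance between two subsets of the circle. -/
noncomputable def setDist (A B : Set (AddCircle (1 : ℝ))) : ℝ :=
  sInf {r | ∃ p ∈ A, ∃ q ∈ B, dist p q = r}

/-- Quantitative growth for a function with derivative `> η/2` on an ord-connected set. -/
lemma aux_speed {Λ : Set ℝ} (hΛ : Λ.OrdConnected) {f : ℝ → ℝ} (hf : Differentiable ℝ f)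
    {η : ℝ} (hd : ∀ τ ∈ Λ, η / 2 < deriv f τ) {τ₁ τ₂ : ℝ} (h1 : τ₁ ∈ Λ) (h2 : τ₂ ∈ Λ)
    (h : τ₁ ≤ τ₂) : η / 2 * (τ₂ - τ₁) ≤ f τ₂ - f τ₁ := by
  rcases eq_or_lt_of_le h with rfl | hlt
  · simp
  have hmono : StrictMonoOn (fun s => f s - η / 2 * s) Λ := by
    apply strictMonoOn_of_deriv_pos (convex_iff_ordConnected.mpr hΛ)
    · exact (hf.sub ((differentiable_id.const_mul (η / 2)))).continuous.continuousOn
    · intro x hx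
      have hx' : x ∈ Λ := interior_subset hx
      have hder : HasDerivAt (fun s => f s - η / 2 * s) (deriv f x - η / 2 * 1) x :=
        ((hf x).hasDerivAt).sub ((hasDerivAt_id x).const_mul (η / 2))
      rw [hder.deriv]
      have := hd x hx'
      linarith
  have := hmono h1 h2 hlt
  dsimp at this
  linarith

lemma aux_coe_int_zero (n : ℤ) : ((n : ℝ) : AddCircle (1 : ℝ)) = 0 := by
  rw [AddCircle.coe_eq_zero_iff]
  exact ⟨n, by simp⟩

/-- If no integer lies in `[c-b-ε, d-a+ε]`, then the arcs are at distance `> ε`. -/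
lemma aux_dist_lb {a b c d ε : ℝ} (hab : a < b) (hcd : c < d)
    (hno : ∀ n : ℤ, ¬((c - b) - ε ≤ (n : ℝ) ∧ (n : ℝ) ≤ (d - a) + ε)) (hε : 0 < ε) :
    ε < setDist (arc a b) (arc c d) := by
  set n₀ : ℤ := ⌈(c - b) - ε⌉ with hn₀
  have hceil1 : (c - b) - ε ≤ (n₀ : ℝ) := Int.le_ceil _
  have hceil2 : (n₀ : ℝ) < (c - b) - ε + 1 := Int.ceil_lt_add_one _
  have hbig : (d - a) + ε < (n₀ : ℝ) := by
    by_contra hcon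
    exact hno n₀ ⟨hceil1, le_of_not_gt hcon⟩
  set m : ℝ := min ((n₀ : ℝ) - (d - a)) ((c - b) + 1 - n₀) with hm
  have hmε : ε < m := by
    apply lt_min <;> linarith
  have hlb : ∀ r ∈ {r | ∃ p ∈ arc a b, ∃ q ∈ arc c d, dist p q = r}, m ≤ r := by
    rintro r ⟨p, ⟨x, hx, rfl⟩, q, ⟨y, hy, rfl⟩, rfl⟩
    have hdist : dist ((x : AddCircle (1:ℝ))) ((y : AddCircle (1:ℝ)))
        = |(y - x) - round (y - x)| := by
      rw [dist_eq_norm, ← AddCircle.coe_sub, ← norm_neg, ← AddCircle.coe_neg]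
      have : -(x - y) = y - x := by ring
      rw [this, AddCircle.norm_eq]
      norm_num
    rw [hdist]
    set z : ℝ := y - x with hz
    have hz1 : c - b < z := by
      simp only [Set.mem_Ioo] at hx hy
      have := hx.2; have := hy.1; simp only [hz]; linarith
    have hz2 : z < d - a := by
      simp only [Set.mem_Ioo] at hx hy
      have := hx.1; have := hy.2; simp only [hz]; linarith
    set k : ℤ := round z with hk
    rcases le_or_gt n₀ k with hkk | hkk
    · have : (n₀ : ℝ) ≤ (k : ℝ) := by exact_mod_cast hkk
      have h1 : m ≤ (k : ℝ) - z := by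
        have := min_le_left ((n₀ : ℝ) - (d - a)) ((c - b) + 1 - n₀)
        rw [← hm] at this
        linarith
      calc m ≤ (k : ℝ) - z := h1
        _ ≤ |z - k| := by rw [abs_sub_comm]; exact le_abs_self _
    · have hk' : k ≤ n₀ - 1 := by omega
      have : (k : ℝ) ≤ (n₀ : ℝ) - 1 := by exact_mod_cast hk'
      have h1 : m ≤ z - (k : ℝ) := by
        have := min_le_right ((n₀ : ℝ) - (d - a)) ((c - b) + 1 - n₀)
        rw [← hm] at this
        linarith
      calc m ≤ z - (k : ℝ) := h1
        _ ≤ |z - k| := le_abs_self _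
  have hne : {r | ∃ p ∈ arc a b, ∃ q ∈ arc c d, dist p q = r}.Nonempty := by
    refine ⟨_, ⟨(((a + b) / 2 : ℝ) : AddCircle (1:ℝ)), ⟨(a + b) / 2, ?_, rfl⟩,
      (((c + d) / 2 : ℝ) : AddCircle (1:ℝ)), ⟨(c + d) / 2, ?_, rfl⟩, rfl⟩⟩
    · exact ⟨by linarith, by linarith⟩
    · exact ⟨by linarith, by linarith⟩
  calc ε < m := hmε
    _ ≤ setDist (arc a b) (arc c d) := le_csInf hne hlb

/-- If two disjoint parameter-dependent open arcs `I(τ) = (a τ, b τ)`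
and `J(τ) = (c τ, d τ)` on the circle, of length ≤ δ, move with relative speed
> η/2 (all endpoint differences have derivative > η/2 in τ), then the set of
parameters τ in the interval Λ where the two arcs come ε-close is covered by at
most 2 intervals, each of length ≤ 4(δ+ε)/η, hence has measure ≤ 8(δ+ε)/η. -/
theorem relative_speed_parameter_exclusion
    (Λ : Set ℝ) (hΛ : Λ.OrdConnected) (δ ε η : ℝ)
    (hδ : 0 < δ) (hε : 0 < ε) (hη : 0 < η)
    (a b c d : ℝ → ℝ)
    (haD : Differentiable ℝ a) (hbD : Differentiable ℝ b)
    (hcD : Differentiable ℝ c) (hdD : Differentiable ℝ d)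
    (hlenI : ∀ τ ∈ Λ, 0 < b τ - a τ ∧ b τ - a τ ≤ δ)
    (hlenJ : ∀ τ ∈ Λ, 0 < d τ - c τ ∧ d τ - c τ ≤ δ)
    (hdisj : ∀ τ ∈ Λ, Disjoint (arc (a τ) (b τ)) (arc (c τ) (d τ)))
    (hspeed : ∀ τ ∈ Λ, ∀ x ∈ ({a, b} : Set (ℝ → ℝ)), ∀ y ∈ ({c, d} : Set (ℝ → ℝ)),
        η / 2 < deriv (fun s => y s - x s) τ) :
    (∃ J₁ J₂ : Set ℝ, J₁.OrdConnected ∧ J₂.OrdConnected ∧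
        {τ ∈ Λ | setDist (arc (a τ) (b τ)) (arc (c τ) (d τ)) ≤ ε} ⊆ J₁ ∪ J₂ ∧
        volume J₁ ≤ ENNReal.ofReal (4 * (δ + ε) / η) ∧
        volume J₂ ≤ ENNReal.ofReal (4 * (δ + ε) / η)) ∧
      volume {τ ∈ Λ | setDist (arc (a τ) (b τ)) (arc (c τ) (d τ)) ≤ ε} ≤
        ENNReal.ofReal (8 * (δ + ε) / η) := by
  set S : Set ℝ := {τ ∈ Λ | setDist (arc (a τ) (b τ)) (arc (c τ) (d τ)) ≤ ε} with hS
  have hnn : 0 ≤ 4 * (δ + ε) / η := by positivity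
  rcases Λ.eq_empty_or_nonempty with hΛe | ⟨τ₀, hτ₀⟩
  · have hSe : S = ∅ := by
      rw [hS, hΛe]; simp
    refine ⟨⟨∅, ∅, Set.ordConnected_empty, Set.ordConnected_empty, ?_, ?_, ?_⟩, ?_⟩ <;>
      simp [hSe]
  -- endpoint gap functions
  set f₁ : ℝ → ℝ := fun s => c s - b s with hf₁
  set f₂ : ℝ → ℝ := fun s => d s - a s with hf₂
  have hf₁D : Differentiable ℝ f₁ := hcD.sub hbD
  have hf₂D : Differentiable ℝ f₂ := hdD.sub haD
  have hsp₁ : ∀ τ ∈ Λ, η / 2 < deriv f₁ τ := fun τ hτ =>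
    hspeed τ hτ b (by simp) c (by simp)
  have hsp₂ : ∀ τ ∈ Λ, η / 2 < deriv f₂ τ := fun τ hτ =>
    hspeed τ hτ a (by simp) d (by simp)
  have hgap : ∀ τ ∈ Λ, f₁ τ < f₂ τ := by
    intro τ hτ
    have h1 := (hlenI τ hτ).1
    have h2 := (hlenJ τ hτ).1
    simp only [hf₁, hf₂]; linarith
  -- no integer strictly between f₁ and f₂ (by disjointness of the arcs)
  clear_value f₁ f₂
  have hInt : ∀ τ ∈ Λ, ∀ n : ℤ, ¬(f₁ τ < (n : ℝ) ∧ (n : ℝ) < f₂ τ) := by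
    rintro τ hτ n ⟨h1, h2⟩
    have hab := (hlenI τ hτ).1
    have hcd := (hlenJ τ hτ).1
    have hL1 : a τ ≤ max (a τ) (c τ - n) := le_max_left _ _
    have hL2 : c τ - n ≤ max (a τ) (c τ - n) := le_max_right _ _
    have hR1 : min (b τ) (d τ - n) ≤ b τ := min_le_left _ _
    have hR2 : min (b τ) (d τ - n) ≤ d τ - n := min_le_right _ _
    have hLR : max (a τ) (c τ - n) < min (b τ) (d τ - n) := by
      apply max_lt <;> apply lt_min <;> simp only [hf₁, hf₂] at h1 h2 <;> linarith
    set x : ℝ := (max (a τ) (c τ - n) + min (b τ) (d τ - n)) / 2 with hx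
    clear_value x
    have hx1 : x ∈ Set.Ioo (a τ) (b τ) := ⟨by rw [hx]; linarith, by rw [hx]; linarith⟩
    have hx2 : x + n ∈ Set.Ioo (c τ) (d τ) := ⟨by rw [hx]; linarith, by rw [hx]; linarith⟩
    have hmem1 : (x : AddCircle (1:ℝ)) ∈ arc (a τ) (b τ) := ⟨x, hx1, rfl⟩
    have hmem2 : (x : AddCircle (1:ℝ)) ∈ arc (c τ) (d τ) := by
      refine ⟨x + n, hx2, ?_⟩
      show ((x + (n : ℝ) : ℝ) : AddCircle (1:ℝ)) = (x : AddCircle (1:ℝ))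
      rw [AddCircle.coe_add, aux_coe_int_zero, add_zero]
    exact Set.disjoint_left.mp (hdisj τ hτ) hmem1 hmem2
  -- IVT lemma: impossible to have f₂ τ₁ ≤ m ≤ f₁ τ₂ for τ₁ ≤ τ₂ in Λ
  have hIVT : ∀ τ₁ ∈ Λ, ∀ τ₂ ∈ Λ, τ₁ ≤ τ₂ → ∀ m : ℤ,
      f₂ τ₁ ≤ (m : ℝ) → (m : ℝ) ≤ f₁ τ₂ → False := by
    intro τ₁ h1 τ₂ h2 h12 m hm1 hm2
    set φ : ℝ → ℝ := fun s => (f₁ s + f₂ s) / 2 with hφ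
    have hφc : ContinuousOn φ (Set.Icc τ₁ τ₂) :=
      ((hf₁D.add hf₂D).div_const 2).continuous.continuousOn
    clear_value φ
    have hsub : Set.Icc τ₁ τ₂ ⊆ Λ := hΛ.out h1 h2
    have hmmem : (m : ℝ) ∈ Set.Icc (φ τ₁) (φ τ₂) := by
      have g1 := hgap τ₁ h1
      have g2 := hgap τ₂ h2
      constructor <;> simp only [hφ] <;> linarith
    obtain ⟨τ', hτ', hφτ'⟩ := intermediate_value_Icc h12 hφc hmmem
    have hτ'Λ : τ' ∈ Λ := hsub hτ'
    have g := hgap τ' hτ'Λ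
    apply hInt τ' hτ'Λ m
    constructor <;> simp only [hφ] at hφτ' <;> linarith
  -- the integer N bracketing the gap on all of Λ
  set N : ℤ := ⌈f₂ τ₀⌉ - 1 with hN
  have hN1 : (N : ℝ) < f₂ τ₀ := by
    have := Int.ceil_lt_add_one (f₂ τ₀)
    push_cast [hN]; push_cast at this; linarith
  have hN2 : f₂ τ₀ ≤ (N : ℝ) + 1 := by
    have := Int.le_ceil (f₂ τ₀)
    push_cast [hN]; linarith
  have hN3 : (N : ℝ) ≤ f₁ τ₀ := by
    by_contra hcon
    exact hInt τ₀ hτ₀ N ⟨lt_of_not_ge hcon, hN1⟩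
  clear_value N
  have hNb : ∀ τ ∈ Λ, (N : ℝ) ≤ f₁ τ ∧ f₂ τ ≤ (N : ℝ) + 1 := by
    intro τ hτ
    rcases le_total τ τ₀ with hle | hle
    · have hmono : f₂ τ ≤ f₂ τ₀ := by
        have := aux_speed hΛ hf₂D hsp₂ hτ hτ₀ hle
        nlinarith
      constructor
      · by_contra hcon
        have hcon' : f₁ τ < (N : ℝ) := lt_of_not_ge hcon
        have hf₂N : f₂ τ ≤ (N : ℝ) := by
          by_contra hcon2
          exact hInt τ hτ N ⟨hcon', lt_of_not_ge hcon2⟩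
        exact hIVT τ hτ τ₀ hτ₀ hle N hf₂N hN3
      · linarith
    · have hmono : f₂ τ₀ ≤ f₂ τ := by
        have := aux_speed hΛ hf₂D hsp₂ hτ₀ hτ hle
        nlinarith
      constructor
      · by_contra hcon
        exact hInt τ hτ N ⟨lt_of_not_ge hcon, by linarith⟩
      · by_contra hcon
        have hcon' : (N : ℝ) + 1 < f₂ τ := lt_of_not_ge hcon
        have hf₁N : (N : ℝ) + 1 ≤ f₁ τ := by
          by_contra hcon2
          exact hInt τ hτ (N + 1) (by push_cast; exact ⟨lt_of_not_ge (by push_cast at hcon2 ⊢; linarith), hcon'⟩)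
        exact hIVT τ₀ hτ₀ τ hτ hle (N + 1) (by push_cast; linarith) (by push_cast; linarith)
  -- the two covering intervals
  set S₁ : Set ℝ := {τ ∈ Λ | f₁ τ ≤ (N : ℝ) + ε} with hS₁
  set S₂ : Set ℝ := {τ ∈ Λ | (N : ℝ) + 1 - ε ≤ f₂ τ} with hS₂
  have hS₁oc : S₁.OrdConnected := by
    refine ⟨fun x hx y hy z hz => ?_⟩
    have hzΛ : z ∈ Λ := hΛ.out hx.1 hy.1 hz
    refine ⟨hzΛ, ?_⟩
    have := aux_speed hΛ hf₁D hsp₁ hzΛ hy.1 hz.2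
    have := hy.2
    nlinarith [hz.2]
  have hS₂oc : S₂.OrdConnected := by
    refine ⟨fun x hx y hy z hz => ?_⟩
    have hzΛ : z ∈ Λ := hΛ.out hx.1 hy.1 hz
    refine ⟨hzΛ, ?_⟩
    have := aux_speed hΛ hf₂D hsp₂ hx.1 hzΛ hz.1
    have := hx.2
    nlinarith [hz.1]
  -- the covering
  have hcover : S ⊆ S₁ ∪ S₂ := by
    rintro τ ⟨hτ, hdist⟩
    have hab := (hlenI τ hτ).1
    have hcd := (hlenJ τ hτ).1
    have hex : ∃ n : ℤ, f₁ τ - ε ≤ (n : ℝ) ∧ (n : ℝ) ≤ f₂ τ + ε := by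
      by_contra hcon
      push_neg at hcon
      have hno : ∀ n : ℤ, ¬((c τ - b τ) - ε ≤ (n : ℝ) ∧ (n : ℝ) ≤ (d τ - a τ) + ε) := by
        rintro n ⟨h1, h2⟩
        have := hcon n (by simpa [hf₁] using h1)
        simp only [hf₂] at this
        linarith
      have := aux_dist_lb (show a τ < b τ by linarith) (show c τ < d τ by linarith) hno hε
      linarith
    obtain ⟨n, hn1, hn2⟩ := hex
    obtain ⟨hNl, hNu⟩ := hNb τ hτ
    rcases le_or_gt n N with hnN | hnN
    · left
      refine ⟨hτ, ?_⟩
      have : (n : ℝ) ≤ (N : ℝ) := by exact_mod_cast hnN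
      linarith
    · right
      refine ⟨hτ, ?_⟩
      have : (N : ℝ) + 1 ≤ (n : ℝ) := by exact_mod_cast hnN
      linarith
  -- volume bounds for an ord-connected set pinched by the speed estimate
  have hvol : ∀ (T : Set ℝ), T ⊆ Λ → (∀ σ ∈ T, ∀ σ' ∈ T, σ ≤ σ' → σ' - σ ≤ 2 * ε / η) →
      volume T ≤ ENNReal.ofReal (4 * (δ + ε) / η) := by
    intro T hTΛ hT
    rcases T.eq_empty_or_nonempty with rfl | ⟨t₀, ht₀⟩
    · simp
    have hTsub : T ⊆ Set.Icc (t₀ - 2 * ε / η) (t₀ + 2 * ε / η) := by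
      intro σ hσ
      rcases le_total σ t₀ with h | h
      · have := hT σ hσ t₀ ht₀ h
        exact ⟨by linarith, by linarith [div_nonneg (by linarith : (0:ℝ) ≤ 2 * ε) hη.le]⟩
      · have := hT t₀ ht₀ σ hσ h
        exact ⟨by linarith [div_nonneg (by linarith : (0:ℝ) ≤ 2 * ε) hη.le], by linarith⟩
    calc volume T ≤ volume (Set.Icc (t₀ - 2 * ε / η) (t₀ + 2 * ε / η)) :=
          measure_mono hTsub
      _ = ENNReal.ofReal (4 * ε / η) := by
          rw [Real.volume_Icc]
          congr 1
          ring
      _ ≤ ENNReal.ofReal (4 * (δ + ε) / η) := by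
          apply ENNReal.ofReal_le_ofReal
          apply div_le_div_of_nonneg_right ?_ ?_ |>.trans_eq rfl
          all_goals first | linarith | exact hη
  have hpinch₁ : ∀ σ ∈ S₁, ∀ σ' ∈ S₁, σ ≤ σ' → σ' - σ ≤ 2 * ε / η := by
    intro σ hσ σ' hσ' h
    have hsp := aux_speed hΛ hf₁D hsp₁ hσ.1 hσ'.1 h
    have h1 := (hNb σ hσ.1).1
    have h2 := hσ'.2
    rw [le_div_iff₀ hη]
    nlinarith
  have hpinch₂ : ∀ σ ∈ S₂, ∀ σ' ∈ S₂, σ ≤ σ' → σ' - σ ≤ 2 * ε / η := by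
    intro σ hσ σ' hσ' h
    have hsp := aux_speed hΛ hf₂D hsp₂ hσ.1 hσ'.1 h
    have h1 := hσ.2
    have h2 := (hNb σ' hσ'.1).2
    rw [le_div_iff₀ hη]
    nlinarith
  have hv₁ : volume S₁ ≤ ENNReal.ofReal (4 * (δ + ε) / η) :=
    hvol S₁ (fun σ hσ => hσ.1) hpinch₁
  have hv₂ : volume S₂ ≤ ENNReal.ofReal (4 * (δ + ε) / η) :=
    hvol S₂ (fun σ hσ => hσ.1) hpinch₂
  refine ⟨⟨S₁, S₂, hS₁oc, hS₂oc, hcover, hv₁, hv₂⟩, ?_⟩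
  calc volume S ≤ volume (S₁ ∪ S₂) := measure_mono hcover
    _ ≤ volume S₁ + volume S₂ := measure_union_le _ _
    _ ≤ ENNReal.ofReal (4 * (δ + ε) / η) + ENNReal.ofReal (4 * (δ + ε) / η) :=
        add_le_add hv₁ hv₂
    _ = ENNReal.ofReal (8 * (δ + ε) / η) := by
        rw [← ENNReal.ofReal_add hnn hnn]
        congr 1
        ring
end

section
/- Let 𝒩 ∈ ℕ, M ∈ ℕ, δ, ε, η > 0, and let Λ ⊆ [0,1] be an interval. Suppose ℐ : Λ → 𝒮(𝕋¹) assigns to each τ a set consisting of 𝒩 disjoint connected components I¹(τ), …, I^𝒩(τ), each of length ≤ δ, depending differentiably on τ, such that |D_τ(I^ι(τ), I^κ(τ))| ≥ η/2 for all ι ≠ κ, and such that d(I^ι(τ), I^ι(τ) + nω) > ε for all τ ∈ Λ, n ∈ [1,M], ι ∈ [1,𝒩]. Then the set Υ = {τ ∈ Λ : d(ℐ(τ), ⋃_{n=1}^M (ℐ(τ) + nω)) ≤ ε} has Lebesgue measure ≤ 8𝒩²M(δ+ε)/η and consists of at most 2𝒩²M − 1 connected components. -/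
open MeasureTheory Set

/-!
Lift `ω` to `w : ℝ`. For two components write `(u, v) = I^κ(τ) - I^ι(τ)` for their difference
interval: the translate `I^κ(τ) + nω` comes `ε`-close to `I^ι(τ)` exactly when some integer `k`
satisfies `u - ε ≤ k - n w ≤ v + ε`, and for `ι = κ` this is excluded by hypothesis. For `ι ≠ κ`,
disjointness and continuity keep `(u, v)` inside one fixed `[m, m + 1]`, so, as `ε < 1/2`, only
two integers `k` can occur. Since `u` and `v` move with a common speed `≥ η/2` whose sign is
constant by Darboux, each such `k` is attained on an interval of parameters of length
`≤ (2δ + 2ε)/(η/2)`. Counting `𝒩(𝒩 - 1)` ordered pairs, `M` shifts and two integers gives both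
bounds.
-/

local notation "𝕋" => AddCircle (1 : ℝ)

lemma setDist_le_dist {A B : Set 𝕋} {p q : 𝕋} (hp : p ∈ A) (hq : q ∈ B) :
    setDist A B ≤ dist p q :=
  csInf_le ⟨0, by rintro _ ⟨p, -, q, -, rfl⟩; exact dist_nonneg⟩ ⟨p, hp, q, hq, rfl⟩

lemma le_setDist {A B : Set 𝕋} {c : ℝ} (hA : A.Nonempty) (hB : B.Nonempty)
    (h : ∀ p ∈ A, ∀ q ∈ B, c ≤ dist p q) : c ≤ setDist A B := by
  obtain ⟨p, hp⟩ := hA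
  obtain ⟨q, hq⟩ := hB
  exact le_csInf ⟨_, p, hp, q, hq, rfl⟩ (by rintro _ ⟨p, hp, q, hq, rfl⟩; exact h p hp q hq)

lemma setDist_comm (A B : Set 𝕋) : setDist A B = setDist B A := by
  simp only [setDist]
  congr 1
  ext r
  constructor <;> rintro ⟨p, hp, q, hq, rfl⟩ <;> exact ⟨q, hq, p, hp, dist_comm _ _⟩

lemma setDist_le_half {A B : Set 𝕋} (hA : A.Nonempty) (hB : B.Nonempty) : setDist A B ≤ 1 / 2 := by
  obtain ⟨p, hp⟩ := hA
  obtain ⟨q, hq⟩ := hB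
  refine (setDist_le_dist hp hq).trans ?_
  simpa [dist_eq_norm] using AddCircle.norm_le_half_period (p := 1) (x := p - q) one_ne_zero

lemma setDist_iUnion_left_le_iff {ι : Type*} [Finite ι] [Nonempty ι] {A : ι → Set 𝕋}
    {B : Set 𝕋} (hA : ∀ i, (A i).Nonempty) (hB : B.Nonempty) {ε : ℝ} :
    setDist (⋃ i, A i) B ≤ ε ↔ ∃ i, setDist (A i) B ≤ ε := by
  constructor
  · intro h
    obtain ⟨i, hi⟩ := Finite.exists_min fun i => setDist (A i) B
    refine ⟨i, h.trans' (le_setDist (nonempty_iUnion.2 ⟨i, hA i⟩) hB fun p hp q hq => ?_)⟩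
    obtain ⟨j, hpj⟩ := mem_iUnion.1 hp
    exact (hi j).trans (setDist_le_dist hpj hq)
  · rintro ⟨i, hi⟩
    refine (le_setDist (hA i) hB fun p hp q hq => ?_).trans hi
    exact setDist_le_dist (mem_iUnion_of_mem i hp) hq

lemma setDist_iUnion_right_le_iff {ι : Type*} [Finite ι] [Nonempty ι] {A : Set 𝕋}
    {B : ι → Set 𝕋} (hA : A.Nonempty) (hB : ∀ i, (B i).Nonempty) {ε : ℝ} :
    setDist A (⋃ i, B i) ≤ ε ↔ ∃ i, setDist A (B i) ≤ ε := by
  simp only [setDist_comm A]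
  exact setDist_iUnion_left_le_iff hB hA

lemma arc_nonempty {x y : ℝ} (h : x < y) : (arc x y).Nonempty :=
  (nonempty_Ioo.2 h).image _

lemma image_add_zsmul_arc (w x y : ℝ) (n : ℤ) :
    (fun p => p + n • (w : 𝕋)) '' arc x y = arc (x + n * w) (y + n * w) := by
  rw [arc, arc, image_image, ← image_add_const_Ioo, image_image]
  congr! 2 with t
  rw [← QuotientAddGroup.mk_zsmul, zsmul_eq_mul, QuotientAddGroup.mk_add]

lemma exists_sub_eq_of_mem_Ioo {x₁ y₁ x₂ y₂ ρ : ℝ} (h₁ : x₁ < y₁) (h₂ : x₂ < y₂)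
    (hρ : ρ ∈ Ioo (x₂ - y₁) (y₂ - x₁)) : ∃ s ∈ Ioo x₁ y₁, ∃ t ∈ Ioo x₂ y₂, t - s = ρ := by
  obtain ⟨hρ₁, hρ₂⟩ := hρ
  obtain ⟨s, hs₁, hs₂⟩ := exists_between (show max x₁ (x₂ - ρ) < min y₁ (y₂ - ρ) by
    simp only [max_lt_iff, lt_min_iff]
    exact ⟨⟨h₁, by linarith⟩, by linarith, by linarith⟩)
  simp only [max_lt_iff, lt_min_iff] at hs₁ hs₂
  exact ⟨s, ⟨hs₁.1, hs₂.1⟩, s + ρ, ⟨by linarith, by linarith⟩, by ring⟩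

lemma setDist_arc_arc {x₁ y₁ x₂ y₂ : ℝ} (h₁ : x₁ < y₁) (h₂ : x₂ < y₂) :
    setDist (arc x₁ y₁) (arc x₂ y₂) =
      sInf ((fun ρ : ℝ => ‖(ρ : 𝕋)‖) '' Ioo (x₂ - y₁) (y₂ - x₁)) := by
  have hdist (s t : ℝ) : dist (s : 𝕋) (t : 𝕋) = ‖((t - s : ℝ) : 𝕋)‖ := by
    rw [dist_comm, dist_eq_norm, QuotientAddGroup.mk_sub]
  simp only [setDist]
  congr 1
  ext r
  constructor
  · rintro ⟨_, ⟨s, hs, rfl⟩, _, ⟨t, ht, rfl⟩, rfl⟩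
    exact ⟨t - s, ⟨by linarith [hs.2, ht.1], by linarith [hs.1, ht.2]⟩, (hdist s t).symm⟩
  · rintro ⟨ρ, hρ, rfl⟩
    obtain ⟨s, hs, t, ht, rfl⟩ := exists_sub_eq_of_mem_Ioo h₁ h₂ hρ
    exact ⟨s, ⟨s, hs, rfl⟩, t, ⟨t, ht, rfl⟩, hdist s t⟩

lemma sInf_norm_coe_image_Ioo_le_iff {L R ε : ℝ} (hLR : L < R) (hε : 0 ≤ ε) :
    sInf ((fun ρ : ℝ => ‖(ρ : 𝕋)‖) '' Ioo L R) ≤ ε ↔ ∃ k : ℤ, L - ε ≤ k ∧ (k : ℝ) ≤ R + ε := by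
  have hcont : Continuous fun ρ : ℝ => ‖(ρ : 𝕋)‖ :=
    continuous_norm.comp (AddCircle.continuous_mk' (1 : ℝ))
  constructor
  · intro h
    by_contra! hno
    have hgap : ∀ ρ ∈ Icc L R, ε < ‖(ρ : 𝕋)‖ := fun ρ hρ => by
      by_contra! hle
      rw [UnitAddCircle.norm_eq, abs_le] at hle
      exact (hno (round ρ) (by linarith [hρ.1, hle.2])).not_ge (by linarith [hρ.2, hle.1])
    obtain ⟨ρ₀, hρ₀, hmin⟩ := isCompact_Icc.exists_isMinOn (nonempty_Icc.2 hLR.le)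
      hcont.continuousOn
    refine h.not_gt ((hgap ρ₀ hρ₀).trans_le (le_csInf ((nonempty_Ioo.2 hLR).image _) ?_))
    rintro _ ⟨ρ, hρ, rfl⟩
    exact hmin (Ioo_subset_Icc_self hρ)
  · rintro ⟨k, hk₁, hk₂⟩
    have hnear : ∃ y ∈ Icc L R, dist (k : ℝ) y ≤ ε := by
      rcases le_or_gt (k : ℝ) L with h | h
      · exact ⟨L, left_mem_Icc.2 hLR.le, by rw [Real.dist_eq, abs_le]; constructor <;> linarith⟩
      rcases le_or_gt (k : ℝ) R with h' | h'
      · exact ⟨k, ⟨h.le, h'⟩, by simpa using hε⟩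
      · exact ⟨R, right_mem_Icc.2 hLR.le, by rw [Real.dist_eq, abs_le]; constructor <;> linarith⟩
    obtain ⟨y, hy, hky⟩ := hnear
    have hinf : Metric.infDist (k : ℝ) (Ioo L R) ≤ ε := by
      rw [← Metric.infDist_closure, closure_Ioo hLR.ne]
      exact (Metric.infDist_le_dist_of_mem hy).trans hky
    refine le_of_forall_gt fun c hc => ?_
    obtain ⟨ρ, hρ, hkρ⟩ := (Metric.infDist_lt_iff (nonempty_Ioo.2 hLR)).1 (hinf.trans_lt hc)
    calc sInf ((fun ρ : ℝ => ‖(ρ : 𝕋)‖) '' Ioo L R) ≤ ‖(ρ : 𝕋)‖ :=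
          csInf_le ⟨0, by rintro _ ⟨_, -, rfl⟩; exact norm_nonneg _⟩ ⟨ρ, hρ, rfl⟩
      _ ≤ |ρ - k| := by rw [UnitAddCircle.norm_eq]; exact round_le ρ k
      _ < c := by rwa [abs_sub_comm, ← Real.dist_eq]

lemma setDist_arc_arc_le_iff {x₁ y₁ x₂ y₂ ε : ℝ} (h₁ : x₁ < y₁) (h₂ : x₂ < y₂) (hε : 0 ≤ ε) :
    setDist (arc x₁ y₁) (arc x₂ y₂) ≤ ε ↔
      ∃ k : ℤ, x₂ - y₁ - ε ≤ k ∧ (k : ℝ) ≤ y₂ - x₁ + ε := by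
  rw [setDist_arc_arc h₁ h₂]
  exact sInf_norm_coe_image_Ioo_le_iff (by linarith) hε

lemma intCast_notMem_Ioo_of_disjoint_arc {x₁ y₁ x₂ y₂ : ℝ} (h₁ : x₁ < y₁) (h₂ : x₂ < y₂)
    (hd : Disjoint (arc x₁ y₁) (arc x₂ y₂)) (k : ℤ) : (k : ℝ) ∉ Ioo (x₂ - y₁) (y₂ - x₁) := by
  intro hk
  obtain ⟨s, hs, t, ht, hst⟩ := exists_sub_eq_of_mem_Ioo h₁ h₂ hk
  refine disjoint_left.1 hd ⟨s, hs, rfl⟩ ⟨t, ht, ?_⟩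
  have hk0 : ((k : ℝ) : 𝕋) = 0 := (AddCircle.coe_eq_zero_iff 1).2 ⟨k, by simp⟩
  show ((t : ℝ) : 𝕋) = s
  rw [show t = s + k by linarith, QuotientAddGroup.mk_add, hk0, add_zero]

lemma IsPreconnected.exists_int_le_and_le_add_one {Λ : Set ℝ} (hΛ : IsPreconnected Λ)
    {u v : ℝ → ℝ} (hu : ContinuousOn u Λ) (hv : ContinuousOn v Λ) (huv : ∀ τ ∈ Λ, u τ < v τ)
    (hZ : ∀ τ ∈ Λ, ∀ k : ℤ, (k : ℝ) ∉ Ioo (u τ) (v τ)) :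
    ∃ m : ℤ, ∀ τ ∈ Λ, (m : ℝ) ≤ u τ ∧ v τ ≤ m + 1 := by
  -- the midpoint of `(u τ, v τ)` is never an integer, so its floor is constant on `Λ`
  set h : ℝ → ℝ := fun τ => (u τ + v τ) / 2
  have hmid : ∀ τ ∈ Λ, u τ < h τ ∧ h τ < v τ := fun τ hτ => by
    have := huv τ hτ
    constructor <;> simp only [h] <;> linarith
  have hZh : ∀ τ ∈ Λ, ∀ k : ℤ, h τ ≠ k := fun τ hτ k hk =>
    hZ τ hτ k (hk ▸ hmid τ hτ)
  have hfloor : ∀ τ₁ ∈ Λ, ∀ τ₂ ∈ Λ, ⌊h τ₁⌋ ≤ ⌊h τ₂⌋ := by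
    intro τ₁ h₁ τ₂ h₂
    by_contra! hlt
    have hk : (⌊h τ₁⌋ : ℝ) ∈ Icc (h τ₂) (h τ₁) :=
      ⟨(Int.lt_floor_add_one _).le.trans (by exact_mod_cast hlt), Int.floor_le _⟩
    obtain ⟨τ, hτ, hτk⟩ := hΛ.intermediate_value h₂ h₁ ((hu.add hv).div_const 2) hk
    exact hZh τ hτ _ hτk
  rcases Λ.eq_empty_or_nonempty with rfl | ⟨τ₀, hτ₀⟩
  · simp
  refine ⟨⌊h τ₀⌋, fun τ hτ => ?_⟩
  rw [← le_antisymm (hfloor τ hτ τ₀ hτ₀) (hfloor τ₀ hτ₀ τ hτ)]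
  obtain ⟨hu_lt, hlt_v⟩ := hmid τ hτ
  constructor
  · by_contra! hc
    exact hZ τ hτ ⌊h τ⌋ ⟨hc, (Int.floor_le _).trans_lt hlt_v⟩
  · by_contra! hc
    refine hZ τ hτ (⌊h τ⌋ + 1) ⟨?_, by push_cast; exact hc⟩
    push_cast
    linarith [Int.lt_floor_add_one (h τ)]

lemma Set.OrdConnected.forall_le_deriv_or_forall_deriv_le_neg {Λ : Set ℝ} (hΛ : Λ.OrdConnected)
    {f : ℝ → ℝ} (hf : Differentiable ℝ f) {c : ℝ} (h : ∀ τ ∈ Λ, c ≤ deriv f τ ∨ deriv f τ ≤ -c)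
    (hc : 0 < c) : (∀ τ ∈ Λ, c ≤ deriv f τ) ∨ ∀ τ ∈ Λ, deriv f τ ≤ -c := by
  by_contra! ⟨⟨τ₁, h₁, hlt₁⟩, ⟨τ₂, h₂, hlt₂⟩⟩
  have hneg := (h τ₁ h₁).resolve_left hlt₁.not_ge
  have hpos := (h τ₂ h₂).resolve_right hlt₂.not_ge
  obtain ⟨τ, hτ, h0⟩ := (hΛ.image_deriv fun x _ => hf x).out (mem_image_of_mem _ h₁)
    (mem_image_of_mem _ h₂) (show (0 : ℝ) ∈ Icc (deriv f τ₁) (deriv f τ₂) by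
      constructor <;> linarith)
  rcases h τ hτ with h' | h' <;> linarith

lemma ordConnected_setOf_le_le {Λ : Set ℝ} (hΛ : Λ.OrdConnected) {u v : ℝ → ℝ}
    (hu : MonotoneOn u Λ) (hv : MonotoneOn v Λ) (r : ℝ) :
    {τ ∈ Λ | u τ ≤ r ∧ r ≤ v τ}.OrdConnected :=
  ⟨fun _ h₁ _ h₂ _ hτ =>
    have hτΛ := hΛ.out h₁.1 h₂.1 hτ
    ⟨hτΛ, (hu hτΛ h₂.1 hτ.2).trans h₂.2.1, h₁.2.2.trans (hv h₁.1 hτΛ hτ.1)⟩⟩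

lemma ordConnected_and_volume_setOf_le_le_of_le_deriv {Λ : Set ℝ} (hΛ : Λ.OrdConnected)
    {u v : ℝ → ℝ} (hu : Differentiable ℝ u) (hv : Differentiable ℝ v) {c L : ℝ} (hc : 0 < c)
    (hu' : ∀ τ ∈ Λ, c ≤ deriv u τ) (hv' : ∀ τ ∈ Λ, c ≤ deriv v τ)
    (hL : ∀ τ ∈ Λ, v τ - u τ ≤ L) (r : ℝ) :
    {τ ∈ Λ | u τ ≤ r ∧ r ≤ v τ}.OrdConnected ∧
      volume {τ ∈ Λ | u τ ≤ r ∧ r ≤ v τ} ≤ ENNReal.ofReal (L / c) := by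
  have slope {f : ℝ → ℝ} (hf : Differentiable ℝ f) (hf' : ∀ τ ∈ Λ, c ≤ deriv f τ) :
      ∀ τ₁ ∈ Λ, ∀ τ₂ ∈ Λ, τ₁ ≤ τ₂ → c * (τ₂ - τ₁) ≤ f τ₂ - f τ₁ :=
    hΛ.convex.mul_sub_le_image_sub_of_le_deriv hf.continuous.continuousOn hf.differentiableOn
      fun τ hτ => hf' τ (interior_subset hτ)
  have mono {f : ℝ → ℝ} (hf : Differentiable ℝ f) (hf' : ∀ τ ∈ Λ, c ≤ deriv f τ) :
      MonotoneOn f Λ := fun τ₁ h₁ τ₂ h₂ hle => by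
    nlinarith [slope hf hf' τ₁ h₁ τ₂ h₂ hle]
  refine ⟨ordConnected_setOf_le_le hΛ (mono hu hu') (mono hv hv') r,
    (Real.volume_le_diam _).trans (Metric.ediam_le_of_forall_dist_le ?_)⟩
  -- `u` gains at least `c (τ₂ - τ₁)` while `r` stays in the window `[u, v]` of width `≤ L`
  have key : ∀ τ₁ ∈ {τ ∈ Λ | u τ ≤ r ∧ r ≤ v τ}, ∀ τ₂ ∈ {τ ∈ Λ | u τ ≤ r ∧ r ≤ v τ},
      τ₁ ≤ τ₂ → τ₂ - τ₁ ≤ L / c := fun τ₁ h₁ τ₂ h₂ hle => by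
    rw [le_div_iff₀ hc]
    linarith [slope hu hu' τ₁ h₁.1 τ₂ h₂.1 hle, hL τ₁ h₁.1, h₁.2.2, h₂.2.1]
  intro τ₁ h₁ τ₂ h₂
  rw [Real.dist_eq]
  rcases le_total τ₁ τ₂ with hle | hle
  · rw [abs_sub_comm, abs_of_nonneg (by linarith)]; exact key τ₁ h₁ τ₂ h₂ hle
  · rw [abs_of_nonneg (by linarith)]; exact key τ₂ h₂ τ₁ h₁ hle

lemma ordConnected_and_volume_setOf_le_le {Λ : Set ℝ} (hΛ : Λ.OrdConnected)
    {u v : ℝ → ℝ} (hu : Differentiable ℝ u) (hv : Differentiable ℝ v) {c L : ℝ} (hc : 0 < c)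
    (hd : ∀ τ ∈ Λ, (c ≤ deriv u τ ∧ c ≤ deriv v τ) ∨ (deriv u τ ≤ -c ∧ deriv v τ ≤ -c))
    (hL : ∀ τ ∈ Λ, v τ - u τ ≤ L) (r : ℝ) :
    {τ ∈ Λ | u τ ≤ r ∧ r ≤ v τ}.OrdConnected ∧
      volume {τ ∈ Λ | u τ ≤ r ∧ r ≤ v τ} ≤ ENNReal.ofReal (L / c) := by
  rcases hΛ.forall_le_deriv_or_forall_deriv_le_neg hu
      (fun τ hτ => (hd τ hτ).imp And.left And.left) hc with hu' | hu'
  · refine ordConnected_and_volume_setOf_le_le_of_le_deriv hΛ hu hv hc hu' (fun τ hτ => ?_) hL r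
    exact ((hd τ hτ).resolve_right fun h => by linarith [hu' τ hτ, h.1]).2
  · -- decreasing edges: pass to the increasing edges `-v ≤ -u` and the level `-r`
    have hv' : ∀ τ ∈ Λ, deriv v τ ≤ -c := fun τ hτ =>
      ((hd τ hτ).resolve_left fun h => by linarith [hu' τ hτ, h.1]).2
    have hset : {τ ∈ Λ | u τ ≤ r ∧ r ≤ v τ} = {τ ∈ Λ | -v τ ≤ -r ∧ -r ≤ -u τ} := by
      ext τ
      simp only [mem_ofPred_eq, neg_le_neg_iff]
      tauto
    rw [hset]
    refine ordConnected_and_volume_setOf_le_le_of_le_deriv (u := fun τ => -v τ)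
      (v := fun τ => -u τ) hΛ hv.neg hu.neg hc
      (fun τ hτ => ?_) (fun τ hτ => ?_) (fun τ hτ => by linarith [hL τ hτ]) (-r)
    · rw [deriv.fun_neg]; linarith [hv' τ hτ]
    · rw [deriv.fun_neg]; linarith [hu' τ hτ]

lemma exists_fin_iUnion_eq {α ι : Type*} [Fintype ι] {P : Set α → Prop} (hP : P ∅)
    {S : ι → Set α} (hS : ∀ i, P (S i)) {N : ℕ} (hN : Fintype.card ι ≤ N) :
    ∃ C : Fin N → Set α, (∀ j, P (C j)) ∧ ⋃ i, S i = ⋃ j, C j := by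
  obtain ⟨e⟩ := Function.Embedding.nonempty_of_card_le (α := ι) (β := Fin N)
    (by rwa [Fintype.card_fin])
  refine ⟨Function.extend e S ⊥, fun j => ?_, (iSup_extend_bot e.injective S).symm⟩
  by_cases hj : ∃ i, e i = j
  · obtain ⟨i, rfl⟩ := hj
    rw [e.injective.extend_apply]
    exact hS i
  · rw [Function.extend_apply' _ _ _ hj]
    exact hP

lemma measure_iUnion_le_of_card_le {α ι : Type*} [MeasurableSpace α] (μ : Measure α)
    [Fintype ι] {S : ι → Set α} {D : ℝ} (hS : ∀ i, μ (S i) ≤ ENNReal.ofReal D) {N : ℕ}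
    (hN : Fintype.card ι ≤ N) : μ (⋃ i, S i) ≤ ENNReal.ofReal (N * D) := by
  calc μ (⋃ i, S i) ≤ ∑ i, μ (S i) := measure_iUnion_fintype_le μ S
    _ ≤ Fintype.card ι • ENNReal.ofReal D := Finset.sum_le_card_nsmul _ _ _ fun i _ => hS i
    _ ≤ N • ENNReal.ofReal D := nsmul_le_nsmul_left zero_le hN
    _ = ENNReal.ofReal (N * D) := by
      rw [nsmul_eq_mul, ENNReal.ofReal_mul (Nat.cast_nonneg N), ENNReal.ofReal_natCast]

lemma eq_ceil_or_eq_ceil_add_one {x : ℝ} {k : ℤ} (h₁ : x ≤ k) (h₂ : (k : ℝ) < x + 2) :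
    k = ⌈x⌉ ∨ k = ⌈x⌉ + 1 := by
  have hle := Int.ceil_le.2 h₁
  have hlt : k < ⌈x⌉ + 2 := by
    have : (k : ℝ) < ⌈x⌉ + 2 := h₂.trans_le (by linarith [Int.le_ceil x])
    exact_mod_cast this
  omega

lemma card_offDiag_prod_le {N M : ℕ} (hN : 1 ≤ N) (hM : 1 ≤ M) :
    Fintype.card ({p : Fin N × Fin N // p.1 ≠ p.2} × Finset.Icc 1 M × Fin 2) ≤
      2 * N ^ 2 * M - 1 := by
  have hoff : Fintype.card {p : Fin N × Fin N // p.1 ≠ p.2} = N * N - N := by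
    have := (Finset.univ : Finset (Fin N)).offDiag_card
    rw [Finset.card_univ, Fintype.card_fin] at this
    rw [Fintype.card_subtype, ← this]
    congr 1
    ext p
    simp
  rw [Fintype.card_prod, Fintype.card_prod, hoff, Fintype.card_coe, Nat.card_Icc,
    Fintype.card_fin, Nat.sub_mul]
  have h₁ : 1 ≤ N * M := Nat.mul_le_mul hN hM
  have h₂ : N * N * ((M + 1 - 1) * 2) = 2 * N ^ 2 * M := by rw [Nat.add_sub_cancel]; ring
  have h₃ : N * ((M + 1 - 1) * 2) = 2 * (N * M) := by rw [Nat.add_sub_cancel]; ring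
  omega

lemma setDist_iUnion_arc_iUnion_translate_le_iff {ι : Type*} [Finite ι] [Nonempty ι]
    {x y : ι → ℝ} (hxy : ∀ i, x i < y i) {S : Finset ℕ} (hS : S.Nonempty) (w : ℝ) {ε : ℝ}
    (hε : 0 ≤ ε) :
    setDist (⋃ i, arc (x i) (y i))
        (⋃ n ∈ S, (fun p => p + (n : ℤ) • (w : 𝕋)) '' ⋃ i, arc (x i) (y i)) ≤ ε ↔
      ∃ i j, ∃ n ∈ S, ∃ k : ℤ, x j - y i - ε ≤ k - n * w ∧ k - n * w ≤ y j - x i + ε := by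
  have hS' : Nonempty S := hS.coe_sort
  have htrans : (⋃ n ∈ S, (fun p => p + (n : ℤ) • (w : 𝕋)) '' ⋃ i, arc (x i) (y i)) =
      ⋃ n : S, ⋃ j, arc (x j + n * w) (y j + n * w) := by
    simp only [image_iUnion, image_add_zsmul_arc, Int.cast_natCast, iUnion_subtype]
  have hne : ∀ (s : ℝ) i, (arc (x i + s) (y i + s)).Nonempty :=
    fun s i => arc_nonempty (by linarith [hxy i])
  have hne' : ∀ n : S, (⋃ j, arc (x j + n * w) (y j + n * w)).Nonempty :=
    fun n => nonempty_iUnion.2 ⟨Classical.arbitrary _, hne _ _⟩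
  rw [htrans, setDist_iUnion_left_le_iff (fun i => arc_nonempty (hxy i))
    (nonempty_iUnion.2 ⟨Classical.arbitrary _, hne' _⟩)]
  refine exists_congr fun i => ?_
  rw [setDist_iUnion_right_le_iff (arc_nonempty (hxy i)) hne']
  simp only [setDist_iUnion_right_le_iff (arc_nonempty (hxy i)) (hne _)]
  constructor
  · rintro ⟨⟨n, hn⟩, j, hle⟩
    obtain ⟨k, hk₁, hk₂⟩ := (setDist_arc_arc_le_iff (hxy i) (by linarith [hxy j]) hε).1 hle
    exact ⟨j, n, hn, k, by linarith, by linarith⟩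
  · rintro ⟨j, n, hn, k, hk₁, hk₂⟩
    exact ⟨⟨n, hn⟩, j, (setDist_arc_arc_le_iff (hxy i) (by linarith [hxy j]) hε).2
      ⟨k, by linarith, by linarith⟩⟩

section ParameterExclusion

variable {𝒩 : ℕ} (Λ : Set ℝ) (a b : Fin 𝒩 → ℝ → ℝ) (ε : ℝ)

/-- With `r = k - n w`, the parameters at which `I^κ(τ) + nω` is `ε`-close to `I^ι(τ)` through the
integer `k`. -/
def nearParams (ι κ : Fin 𝒩) (r : ℝ) : Set ℝ :=
  {τ ∈ Λ | a κ τ - b ι τ - ε ≤ r ∧ r ≤ b κ τ - a ι τ + ε}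

variable {Λ a b ε}

lemma ordConnected_and_volume_nearParams {δ η : ℝ} (hΛ : Λ.OrdConnected)
    (haD : ∀ ι, Differentiable ℝ (a ι)) (hbD : ∀ ι, Differentiable ℝ (b ι))
    (hlen : ∀ ι, ∀ τ ∈ Λ, b ι τ - a ι τ ≤ δ) (hη : 0 < η) {ι κ : Fin 𝒩}
    (hspeed : ∀ τ ∈ Λ,
        (∀ x ∈ ({a ι, b ι} : Set (ℝ → ℝ)), ∀ y ∈ ({a κ, b κ} : Set (ℝ → ℝ)),
            η / 2 ≤ deriv (fun s => y s - x s) τ) ∨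
        (∀ x ∈ ({a ι, b ι} : Set (ℝ → ℝ)), ∀ y ∈ ({a κ, b κ} : Set (ℝ → ℝ)),
            deriv (fun s => y s - x s) τ ≤ -(η / 2))) (r : ℝ) :
    (nearParams Λ a b ε ι κ r).OrdConnected ∧
      volume (nearParams Λ a b ε ι κ r) ≤ ENNReal.ofReal (4 * (δ + ε) / η) := by
  have hL : 2 * (δ + ε) / (η / 2) = 4 * (δ + ε) / η := by field_simp; ring
  rw [← hL]
  refine ordConnected_and_volume_setOf_le_le (u := fun τ => a κ τ - b ι τ - ε)
    (v := fun τ => b κ τ - a ι τ + ε) hΛ (((haD κ).sub (hbD ι)).sub_const ε)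
    (((hbD κ).sub (haD ι)).add_const ε) (half_pos hη) (fun τ hτ => ?_)
    (fun τ hτ => by linarith [hlen ι τ hτ, hlen κ τ hτ]) r
  simp only [deriv_sub_const, deriv_add_const]
  exact (hspeed τ hτ).imp (fun h => ⟨h _ (by simp) _ (by simp), h _ (by simp) _ (by simp)⟩)
    (fun h => ⟨h _ (by simp) _ (by simp), h _ (by simp) _ (by simp)⟩)

lemma exists_eq_or_eq_add_one_of_nearParams_nonempty (hΛ : IsPreconnected Λ)
    (ha : ∀ ι, Continuous (a ι)) (hb : ∀ ι, Continuous (b ι))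
    (hab : ∀ ι, ∀ τ ∈ Λ, a ι τ < b ι τ) {ι κ : Fin 𝒩}
    (hdisj : ∀ τ ∈ Λ, Disjoint (arc (a ι τ) (b ι τ)) (arc (a κ τ) (b κ τ))) (hε : ε < 1 / 2) :
    ∃ K : ℝ → ℤ, ∀ (k : ℤ) (s : ℝ), (nearParams Λ a b ε ι κ (k - s)).Nonempty →
      k = K s ∨ k = K s + 1 := by
  -- disjointness traps the difference interval `I^κ(τ) - I^ι(τ)` in a fixed `[m, m + 1]`
  obtain ⟨m, hm⟩ := hΛ.exists_int_le_and_le_add_one (u := fun τ => a κ τ - b ι τ)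
    (v := fun τ => b κ τ - a ι τ) ((ha κ).sub (hb ι)).continuousOn
    ((hb κ).sub (ha ι)).continuousOn (fun τ hτ => by linarith [hab ι τ hτ, hab κ τ hτ])
    (fun τ hτ => intCast_notMem_Ioo_of_disjoint_arc (hab ι τ hτ) (hab κ τ hτ) (hdisj τ hτ))
  refine ⟨fun s => ⌈m + s - ε⌉, fun k s ⟨τ, hτ, hk₁, hk₂⟩ => eq_ceil_or_eq_ceil_add_one ?_ ?_⟩
  · linarith [(hm τ hτ).1]
  · linarith [(hm τ hτ).2]

lemma exclusionSet_eq_iUnion_nearParams [Nonempty (Fin 𝒩)] {M : ℕ} (hM : 1 ≤ M) (w : ℝ)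
    (hε : 0 ≤ ε) (hab : ∀ ι, ∀ τ ∈ Λ, a ι τ < b ι τ)
    (hsep : ∀ τ ∈ Λ, ∀ n ∈ Finset.Icc 1 M, ∀ ι,
        ε < setDist (arc (a ι τ) (b ι τ))
          ((fun p => p + (n : ℤ) • (w : 𝕋)) '' arc (a ι τ) (b ι τ)))
    (K : ∀ ι κ : Fin 𝒩, ι ≠ κ → ℝ → ℤ)
    (hK : ∀ ι κ (h : ι ≠ κ) (k : ℤ) (s : ℝ), (nearParams Λ a b ε ι κ (k - s)).Nonempty →
      k = K ι κ h s ∨ k = K ι κ h s + 1) :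
    {τ ∈ Λ | setDist (⋃ ι, arc (a ι τ) (b ι τ))
        (⋃ n ∈ Finset.Icc 1 M, (fun p => p + (n : ℤ) • (w : 𝕋)) '' ⋃ ι, arc (a ι τ) (b ι τ))
          ≤ ε} =
      ⋃ x : {p : Fin 𝒩 × Fin 𝒩 // p.1 ≠ p.2} × Finset.Icc 1 M × Fin 2,
        nearParams Λ a b ε x.1.1.1 x.1.1.2
          (((K x.1.1.1 x.1.1.2 x.1.2 ((x.2.1 : ℕ) * w) + (x.2.2 : ℕ) : ℤ) : ℝ) -
            (x.2.1 : ℕ) * w) := by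
  have hS : (Finset.Icc 1 M).Nonempty := ⟨1, by simp [hM]⟩
  ext τ
  simp only [mem_iUnion]
  constructor
  · rintro ⟨hτ, hd⟩
    obtain ⟨ι, κ, n, hn, k, hk⟩ :=
      (setDist_iUnion_arc_iUnion_translate_le_iff (hab · τ hτ) hS w hε).1 hd
    have hικ : ι ≠ κ := by
      rintro rfl
      refine (hsep τ hτ n hn ι).not_ge ?_
      rw [image_add_zsmul_arc, setDist_arc_arc_le_iff (hab ι τ hτ) (by linarith [hab ι τ hτ]) hε]
      exact ⟨k, by push_cast; linarith [hk.1], by push_cast; linarith [hk.2]⟩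
    have hmem : τ ∈ nearParams Λ a b ε ι κ (k - n * w) := ⟨hτ, hk⟩
    rcases hK ι κ hικ k _ ⟨τ, hmem⟩ with hk' | hk'
    · exact ⟨⟨⟨(ι, κ), hικ⟩, ⟨n, hn⟩, 0⟩, by simpa [← hk'] using hmem⟩
    · exact ⟨⟨⟨(ι, κ), hικ⟩, ⟨n, hn⟩, 1⟩, by simpa [← hk'] using hmem⟩
  · rintro ⟨⟨⟨⟨ι, κ⟩, hικ⟩, ⟨n, hn⟩, j⟩, hτ, hk⟩
    exact ⟨hτ, (setDist_iUnion_arc_iUnion_translate_le_iff (hab · τ hτ) hS w hε).2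
      ⟨ι, κ, n, hn, _, hk⟩⟩

end ParameterExclusion

theorem parameter_exclusion_basic_general
    (𝒩 M : ℕ) (h𝒩 : 1 ≤ 𝒩) (hM : 1 ≤ M)
    (δ ε η : ℝ) (hε : 0 < ε) (hη : 0 < η)
    (ω : AddCircle (1 : ℝ))
    (Λ : Set ℝ) (hΛ : Λ.OrdConnected)
    (a b : Fin 𝒩 → ℝ → ℝ)
    (haD : ∀ ι, Differentiable ℝ (a ι)) (hbD : ∀ ι, Differentiable ℝ (b ι))
    (hlen : ∀ ι, ∀ τ ∈ Λ, 0 < b ι τ - a ι τ ∧ b ι τ - a ι τ ≤ δ)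
    (hdisj : ∀ τ ∈ Λ, ∀ ι κ, ι ≠ κ →
        Disjoint (arc (a ι τ) (b ι τ)) (arc (a κ τ) (b κ τ)))
    (hspeed : ∀ τ ∈ Λ, ∀ ι κ, ι ≠ κ →
        (∀ x ∈ ({a ι, b ι} : Set (ℝ → ℝ)), ∀ y ∈ ({a κ, b κ} : Set (ℝ → ℝ)),
            η / 2 ≤ deriv (fun s => y s - x s) τ) ∨
        (∀ x ∈ ({a ι, b ι} : Set (ℝ → ℝ)), ∀ y ∈ ({a κ, b κ} : Set (ℝ → ℝ)),
            deriv (fun s => y s - x s) τ ≤ -(η / 2)))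
    (hsep : ∀ τ ∈ Λ, ∀ n ∈ Finset.Icc 1 M, ∀ ι,
        ε < setDist (arc (a ι τ) (b ι τ))
          ((fun p => p + (n : ℤ) • ω) '' arc (a ι τ) (b ι τ))) :
    volume {τ ∈ Λ | setDist (⋃ ι, arc (a ι τ) (b ι τ))
        (⋃ n ∈ Finset.Icc 1 M,
          (fun p => p + (n : ℤ) • ω) '' ⋃ ι, arc (a ι τ) (b ι τ)) ≤ ε} ≤
        ENNReal.ofReal (8 * 𝒩^2 * M * (δ + ε) / η) ∧
      ∃ C : Fin (2 * 𝒩^2 * M - 1) → Set ℝ, (∀ i, (C i).OrdConnected) ∧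
        {τ ∈ Λ | setDist (⋃ ι, arc (a ι τ) (b ι τ))
          (⋃ n ∈ Finset.Icc 1 M,
            (fun p => p + (n : ℤ) • ω) '' ⋃ ι, arc (a ι τ) (b ι τ)) ≤ ε} =
          ⋃ i, C i := by
  rcases Λ.eq_empty_or_nonempty with rfl | ⟨τ₀, hτ₀⟩
  · exact ⟨by simp, fun _ => ∅, fun _ => ordConnected_empty, by simp⟩
  obtain ⟨w, rfl⟩ := QuotientAddGroup.mk_surjective ω
  have : Nonempty (Fin 𝒩) := ⟨⟨0, h𝒩⟩⟩
  have hab : ∀ ι, ∀ τ ∈ Λ, a ι τ < b ι τ := fun ι τ hτ => sub_pos.1 (hlen ι τ hτ).1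
  have hε₂ : ε < 1 / 2 := by
    have hne := arc_nonempty (hab ⟨0, h𝒩⟩ τ₀ hτ₀)
    exact (hsep τ₀ hτ₀ 1 (by simp [hM]) _).trans_le (setDist_le_half hne (hne.image _))
  choose K hK using fun ι κ (h : ι ≠ κ) =>
    exists_eq_or_eq_add_one_of_nearParams_nonempty hΛ.isPreconnected
      (fun ι => (haD ι).continuous) (fun ι => (hbD ι).continuous) hab
      (fun τ hτ => hdisj τ hτ ι κ h) hε₂
  have hpiece (x : {p : Fin 𝒩 × Fin 𝒩 // p.1 ≠ p.2} × Finset.Icc 1 M × Fin 2) (r : ℝ) :=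
    ordConnected_and_volume_nearParams (ε := ε) hΛ haD hbD (fun ι τ hτ => (hlen ι τ hτ).2) hη
      (fun τ hτ => hspeed τ hτ _ _ x.1.2) r
  have hcard := card_offDiag_prod_le h𝒩 hM
  rw [exclusionSet_eq_iUnion_nearParams hM w hε.le hab hsep K hK]
  refine ⟨(measure_iUnion_le_of_card_le volume (fun x => (hpiece x _).2)
    (hcard.trans (Nat.sub_le _ _))).trans_eq ?_,
    exists_fin_iUnion_eq ordConnected_empty (fun x => (hpiece x _).1) hcard⟩
  congr 1
  push_cast
  ring

/-- Lemma 4.4 of the paper: if ℐ(τ) consists of 𝒩 disjoint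
intervals of length ≤ δ, any two distinct components move relative to each
other with speed ≥ η/2, and each component stays ε-away from its own first M
translates by ω, then the set Υ of parameters τ ∈ Λ at which ℐ(τ) comes
ε-close to one of its first M translates has measure ≤ 8𝒩²M(δ+ε)/η and
consists of at most 2𝒩²M - 1 connected components. -/
theorem parameter_exclusion_basic
    (𝒩 M : ℕ) (h𝒩 : 1 ≤ 𝒩) (hM : 1 ≤ M)
    (δ ε η : ℝ) (hδ : 0 < δ) (hε : 0 < ε) (hη : 0 < η)
    (ω : AddCircle (1 : ℝ))
    (Λ : Set ℝ) (hΛ : Λ.OrdConnected) (hΛ01 : Λ ⊆ Set.Icc (0:ℝ) 1)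
    (a b : Fin 𝒩 → ℝ → ℝ)
    (haD : ∀ ι, Differentiable ℝ (a ι)) (hbD : ∀ ι, Differentiable ℝ (b ι))
    (hlen : ∀ ι, ∀ τ ∈ Λ, 0 < b ι τ - a ι τ ∧ b ι τ - a ι τ ≤ δ)
    (hdisj : ∀ τ ∈ Λ, ∀ ι κ, ι ≠ κ →
        Disjoint (arc (a ι τ) (b ι τ)) (arc (a κ τ) (b κ τ)))
    (hspeed : ∀ τ ∈ Λ, ∀ ι κ, ι ≠ κ →
        (∀ x ∈ ({a ι, b ι} : Set (ℝ → ℝ)), ∀ y ∈ ({a κ, b κ} : Set (ℝ → ℝ)),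
            η / 2 ≤ deriv (fun s => y s - x s) τ) ∨
        (∀ x ∈ ({a ι, b ι} : Set (ℝ → ℝ)), ∀ y ∈ ({a κ, b κ} : Set (ℝ → ℝ)),
            deriv (fun s => y s - x s) τ ≤ -(η / 2)))
    (hsep : ∀ τ ∈ Λ, ∀ n ∈ Finset.Icc 1 M, ∀ ι,
        ε < setDist (arc (a ι τ) (b ι τ))
          ((fun p => p + (n : ℤ) • ω) '' arc (a ι τ) (b ι τ))) :
    volume {τ ∈ Λ | setDist (⋃ ι, arc (a ι τ) (b ι τ))
        (⋃ n ∈ Finset.Icc 1 M,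
          (fun p => p + (n : ℤ) • ω) '' ⋃ ι, arc (a ι τ) (b ι τ)) ≤ ε} ≤
        ENNReal.ofReal (8 * 𝒩^2 * M * (δ + ε) / η) ∧
      ∃ C : Fin (2 * 𝒩^2 * M - 1) → Set ℝ, (∀ i, (C i).OrdConnected) ∧
        {τ ∈ Λ | setDist (⋃ ι, arc (a ι τ) (b ι τ))
          (⋃ n ∈ Finset.Icc 1 M,
            (fun p => p + (n : ℤ) • ω) '' ⋃ ι, arc (a ι τ) (b ι τ)) ≤ ε} =
          ⋃ i, C i :=
  parameter_exclusion_basic_general 𝒩 M h𝒩 hM δ ε η hε hη ω Λ hΛ a b haD hbD hlen hdisj hspeed hsep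
end
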